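/- arXiv:2305.10895 — 9 statements merged into one kernel-verified Lean document; each statement's English description precedes it below -/
import Mathlib

section
/- Let a_1,...,a_n be real numbers with sum zero and sum of squares equal to a. Then |∑ a_i^3| ≤ (n-2)/√(n(n-1)) · a^{3/2}. -/
/-!
By Cauchy–Schwarz applied to the other coordinates, every `a i` is at most
`b = (n - 1) √A / √(n(n - 1))`. Hence `(a i + d) ^ 2 (a i - b) ≤ 0` for every `d`; summing and
using `∑ a i = 0` bounds `∑ a i ^ 3` by a quadratic expression in `b` and `d`, which for
`d = b / (n - 1)` (the configuration with one coordinate `b` and all others `-d`) is the claimed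
bound. Replacing `a` by `-a` gives the lower bound.
-/

open Finset Real

variable {ι : Type*} [Fintype ι]

lemma card_mul_sq_le_of_sum_eq_zero {a : ι → ℝ} (hsum : ∑ j, a j = 0) (i : ι) :
    Fintype.card ι * a i ^ 2 ≤ (Fintype.card ι - 1) * ∑ j, a j ^ 2 := by
  classical
  have hcs := sq_sum_le_card_mul_sum_sq (s := univ.erase i) (f := a)
  rw [card_erase_of_mem (mem_univ i), card_univ, Nat.cast_pred (Fintype.card_pos_iff.2 ⟨i⟩)]
    at hcs
  rw [← add_sum_erase univ a (mem_univ i)] at hsum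
  rw [← add_sum_erase univ (fun j => a j ^ 2) (mem_univ i)]
  rw [show ∑ j ∈ univ.erase i, a j = -a i by linarith] at hcs
  nlinarith

lemma le_of_sum_eq_zero_of_card_mul_sq_eq {a : ι → ℝ} (hsum : ∑ j, a j = 0) {b : ℝ}
    (hb : 0 ≤ b) (hbsq : Fintype.card ι * b ^ 2 = (Fintype.card ι - 1) * ∑ j, a j ^ 2) (i : ι) :
    a i ≤ b := by
  have hcard : (0 : ℝ) < Fintype.card ι := Nat.cast_pos.2 (Fintype.card_pos_iff.2 ⟨i⟩)
  refine le_of_sq_le_sq ?_ hb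
  nlinarith [card_mul_sq_le_of_sum_eq_zero hsum i]

lemma sum_cube_le_of_forall_le {a : ι → ℝ} (hsum : ∑ i, a i = 0) {b : ℝ} (hb : ∀ i, a i ≤ b)
    (d : ℝ) : ∑ i, a i ^ 3 ≤ (b - 2 * d) * ∑ i, a i ^ 2 + Fintype.card ι * b * d ^ 2 := by
  have hnonpos : ∑ i, (a i + d) ^ 2 * (a i - b) ≤ 0 :=
    sum_nonpos fun i _ => mul_nonpos_of_nonneg_of_nonpos (sq_nonneg _) (by linarith [hb i])
  calc ∑ i, a i ^ 3
      = ∑ i, ((a i + d) ^ 2 * (a i - b) - (2 * d - b) * a i ^ 2 - (d ^ 2 - 2 * b * d) * a i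
          + b * d ^ 2) := sum_congr rfl fun i _ => by ring
    _ = ∑ i, (a i + d) ^ 2 * (a i - b) - (2 * d - b) * ∑ i, a i ^ 2
          - (d ^ 2 - 2 * b * d) * ∑ i, a i + Fintype.card ι * (b * d ^ 2) := by
      simp only [sum_add_distrib, sum_sub_distrib, mul_sum, sum_const, card_univ, nsmul_eq_mul]
    _ ≤ (b - 2 * d) * ∑ i, a i ^ 2 + Fintype.card ι * b * d ^ 2 := by
      rw [hsum]; nlinarith

lemma rpow_three_halves_eq_sqrt_pow {A : ℝ} (hA : 0 ≤ A) : A ^ ((3 : ℝ) / 2) = √A ^ 3 := by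
  rw [sqrt_eq_rpow, ← rpow_natCast, ← rpow_mul hA]
  norm_num

lemma card_mul_extremal_sq {n A : ℝ} (hn : 1 < n) (hA : 0 ≤ A) :
    n * ((n - 1) * √A / √(n * (n - 1))) ^ 2 = (n - 1) * A := by
  have hnn : 0 < n * (n - 1) := by nlinarith
  rw [div_pow, sq_sqrt hnn.le, mul_pow, sq_sqrt hA]
  field_simp

lemma extremal_cube_bound_eq {n A : ℝ} (hn : 1 < n) (hA : 0 ≤ A) :
    ((n - 1) * √A / √(n * (n - 1)) - 2 * (√A / √(n * (n - 1)))) * A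
      + n * ((n - 1) * √A / √(n * (n - 1))) * (√A / √(n * (n - 1))) ^ 2
      = (n - 2) / √(n * (n - 1)) * A ^ ((3 : ℝ) / 2) := by
  have hnn : 0 < n * (n - 1) := by nlinarith
  have hr : 0 < √(n * (n - 1)) := sqrt_pos.2 hnn
  obtain ⟨s, hs, rfl⟩ : ∃ s, 0 ≤ s ∧ A = s ^ 2 := ⟨√A, sqrt_nonneg _, (sq_sqrt hA).symm⟩
  rw [rpow_three_halves_eq_sqrt_pow (sq_nonneg s), sqrt_sq hs]
  field_simp
  rw [sq_sqrt hnn.le]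
  ring

lemma sum_cube_le {a : ι → ℝ} (hcard : 2 ≤ Fintype.card ι) (hsum : ∑ i, a i = 0) :
    ∑ i, a i ^ 3 ≤ (Fintype.card ι - 2) / √(Fintype.card ι * (Fintype.card ι - 1))
      * (∑ i, a i ^ 2) ^ ((3 : ℝ) / 2) := by
  have hn : (1 : ℝ) < Fintype.card ι := by exact_mod_cast hcard
  have hA : 0 ≤ ∑ i, a i ^ 2 := sum_nonneg fun i _ => sq_nonneg _
  have hbound := le_of_sum_eq_zero_of_card_mul_sq_eq hsum
    (div_nonneg (mul_nonneg (by linarith) (sqrt_nonneg _)) (sqrt_nonneg _)) (card_mul_extremal_sq hn hA)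
  rw [← extremal_cube_bound_eq hn hA]
  exact sum_cube_le_of_forall_le hsum hbound _

lemma abs_sum_cube_le {a : ι → ℝ} (hcard : 2 ≤ Fintype.card ι) (hsum : ∑ i, a i = 0) :
    |∑ i, a i ^ 3| ≤ (Fintype.card ι - 2) / √(Fintype.card ι * (Fintype.card ι - 1))
      * (∑ i, a i ^ 2) ^ ((3 : ℝ) / 2) := by
  have hneg := sum_cube_le (a := -a) hcard (by simp [hsum])
  simp only [Pi.neg_apply, Odd.neg_pow (by decide : Odd 3), even_two.neg_pow, sum_neg_distrib]
    at hneg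
  exact abs_le.2 ⟨by linarith, sum_cube_le hcard hsum⟩

theorem okumura_lemma (n : ℕ) (hn : 2 ≤ n) (a : Fin n → ℝ) (A : ℝ)
    (hsum : ∑ i, a i = 0) (hsq : ∑ i, (a i) ^ 2 = A) :
    |∑ i, (a i) ^ 3| ≤ (n - 2) / Real.sqrt (n * (n - 1)) * A ^ ((3 : ℝ) / 2) := by
  subst hsq
  simpa using abs_sum_cube_le (by simpa using hn) hsum
end

section
/- Let b_1,...,b_n be real numbers with ∑ b_i = 0 and ∑ b_i^2 = B. Then ∑ b_i^4 − B^2/n ≤ (n-2)^2/(n(n-1)) · B^2. -/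
theorem cheng_lemma_3_3 (n : ℕ) (hn : 2 ≤ n) (b : Fin n → ℝ) (B : ℝ)
    (hsum : ∑ i, b i = 0) (hsq : ∑ i, (b i) ^ 2 = B) :
    ∑ i, (b i) ^ 4 - B ^ 2 / n ≤ (n - 2) ^ 2 / (n * (n - 1)) * B ^ 2 := by
  set S : ℝ := ∑ i, (b i) ^ 4 with hS
  set C : ℝ := ∑ i, (b i) ^ 3 with hC
  have hn0 : (0 : ℝ) < (n : ℝ) := by positivity
  have hn1 : (0 : ℝ) < (n : ℝ) - 1 := by
    have : (2 : ℝ) ≤ (n : ℝ) := by exact_mod_cast hn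
    linarith
  -- moment helper
  have hpoly : ∀ c0 c1 c2 c3 c4 : ℝ,
      ∑ j, (c0 + c1 * b j + c2 * (b j) ^ 2 + c3 * (b j) ^ 3 + c4 * (b j) ^ 4)
        = (n : ℝ) * c0 + c2 * B + c3 * C + c4 * S := by
    intro c0 c1 c2 c3 c4
    rw [Finset.sum_add_distrib, Finset.sum_add_distrib, Finset.sum_add_distrib,
      Finset.sum_add_distrib, ← Finset.mul_sum, ← Finset.mul_sum, ← Finset.mul_sum,
      ← Finset.mul_sum, hsum, hsq, Finset.sum_const, Finset.card_univ, Fintype.card_fin,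
      nsmul_eq_mul, ← hC, ← hS]
    ring
  -- pointwise bound
  have hpt : ∀ i j : Fin n,
      (b i - b j) ^ 2 * (b i + b j) ^ 2
        ≤ ((n : ℝ) - 2) * ((b i - b j) ^ 2 * (B - (b i) ^ 2 - (b j) ^ 2)) := by
    intro i j
    rcases eq_or_ne i j with rfl | hij
    · simp
    · have hjmem : j ∈ Finset.univ.erase i := by
        simp [hij.symm]
      set s : Finset (Fin n) := (Finset.univ.erase i).erase j with hs
      have hsum1 : b j + ∑ k ∈ s, b k = ∑ k ∈ Finset.univ.erase i, b k :=
        Finset.add_sum_erase _ b hjmem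
      have hsum2 : b i + ∑ k ∈ Finset.univ.erase i, b k = ∑ k, b k :=
        Finset.add_sum_erase _ b (Finset.mem_univ i)
      have hsq1 : (b j) ^ 2 + ∑ k ∈ s, (b k) ^ 2 = ∑ k ∈ Finset.univ.erase i, (b k) ^ 2 :=
        Finset.add_sum_erase _ (fun k => (b k) ^ 2) hjmem
      have hsq2 : (b i) ^ 2 + ∑ k ∈ Finset.univ.erase i, (b k) ^ 2 = ∑ k, (b k) ^ 2 :=
        Finset.add_sum_erase _ (fun k => (b k) ^ 2) (Finset.mem_univ i)
      have hsumS : ∑ k ∈ s, b k = -(b i + b j) := by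
        rw [hsum] at hsum2; linarith
      have hsqS : ∑ k ∈ s, (b k) ^ 2 = B - (b i) ^ 2 - (b j) ^ 2 := by
        rw [hsq] at hsq2; linarith
      have hcard : (s.card : ℝ) = (n : ℝ) - 2 := by
        have h1 : s.card = n - 2 := by
          rw [hs, Finset.card_erase_of_mem hjmem, Finset.card_erase_of_mem (Finset.mem_univ i),
            Finset.card_univ, Fintype.card_fin]
          omega
        rw [h1, Nat.cast_sub hn]
        norm_num
      have hcs : (∑ k ∈ s, b k) ^ 2 ≤ (s.card : ℝ) * ∑ k ∈ s, (b k) ^ 2 :=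
        sq_sum_le_card_mul_sum_sq
      rw [hsumS, hsqS, hcard] at hcs
      have hcs' : (b i + b j) ^ 2 ≤ ((n : ℝ) - 2) * (B - (b i) ^ 2 - (b j) ^ 2) := by
        calc (b i + b j) ^ 2 = (-(b i + b j)) ^ 2 := by ring
        _ ≤ _ := hcs
      calc (b i - b j) ^ 2 * (b i + b j) ^ 2
          ≤ (b i - b j) ^ 2 * (((n : ℝ) - 2) * (B - (b i) ^ 2 - (b j) ^ 2)) :=
            mul_le_mul_of_nonneg_left hcs' (sq_nonneg _)
        _ = ((n : ℝ) - 2) * ((b i - b j) ^ 2 * (B - (b i) ^ 2 - (b j) ^ 2)) := by ring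
  -- sum the pointwise bound
  have hsumle : ∑ i, ∑ j, (b i - b j) ^ 2 * (b i + b j) ^ 2
      ≤ ∑ i, ∑ j, ((n : ℝ) - 2) * ((b i - b j) ^ 2 * (B - (b i) ^ 2 - (b j) ^ 2)) :=
    Finset.sum_le_sum fun i _ => Finset.sum_le_sum fun j _ => hpt i j
  -- left identity
  have hL : ∑ i, ∑ j, (b i - b j) ^ 2 * (b i + b j) ^ 2 = 2 * (n : ℝ) * S - 2 * B ^ 2 := by
    have h1 : ∀ i : Fin n, ∑ j, (b i - b j) ^ 2 * (b i + b j) ^ 2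
        = (n : ℝ) * (b i) ^ 4 - 2 * B * (b i) ^ 2 + S := by
      intro i
      rw [Finset.sum_congr rfl fun j _ => (by ring :
        (b i - b j) ^ 2 * (b i + b j) ^ 2
          = (b i) ^ 4 + 0 * b j + (-2 * (b i) ^ 2) * (b j) ^ 2 + 0 * (b j) ^ 3 + 1 * (b j) ^ 4)]
      rw [hpoly ((b i) ^ 4) 0 (-2 * (b i) ^ 2) 0 1]
      ring
    rw [Finset.sum_congr rfl fun i _ => h1 i]
    rw [Finset.sum_congr rfl fun i _ => (by ring :
      (n : ℝ) * (b i) ^ 4 - 2 * B * (b i) ^ 2 + S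
        = S + 0 * b i + (-2 * B) * (b i) ^ 2 + 0 * (b i) ^ 3 + (n : ℝ) * (b i) ^ 4)]
    rw [hpoly S 0 (-2 * B) 0 (n : ℝ)]
    ring
  -- right identity
  have hR : ∑ i, ∑ j, (b i - b j) ^ 2 * (B - (b i) ^ 2 - (b j) ^ 2)
      = 2 * (n : ℝ) * B ^ 2 - 2 * (n : ℝ) * S - 2 * B ^ 2 := by
    have h1 : ∀ i : Fin n, ∑ j, (b i - b j) ^ 2 * (B - (b i) ^ 2 - (b j) ^ 2)
        = (n : ℝ) * (B * (b i) ^ 2 - (b i) ^ 4) + (B - 2 * (b i) ^ 2) * B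
          + (2 * b i) * C + (-1) * S := by
      intro i
      rw [Finset.sum_congr rfl fun j _ => (by ring :
        (b i - b j) ^ 2 * (B - (b i) ^ 2 - (b j) ^ 2)
          = (B * (b i) ^ 2 - (b i) ^ 4) + (2 * (b i) ^ 3 - 2 * B * b i) * b j
            + (B - 2 * (b i) ^ 2) * (b j) ^ 2 + (2 * b i) * (b j) ^ 3 + (-1) * (b j) ^ 4)]
      rw [hpoly (B * (b i) ^ 2 - (b i) ^ 4) (2 * (b i) ^ 3 - 2 * B * b i)
        (B - 2 * (b i) ^ 2) (2 * b i) (-1)]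
    rw [Finset.sum_congr rfl fun i _ => h1 i]
    rw [Finset.sum_congr rfl fun i _ => (by ring :
      (n : ℝ) * (B * (b i) ^ 2 - (b i) ^ 4) + (B - 2 * (b i) ^ 2) * B + (2 * b i) * C + (-1) * S
        = (B ^ 2 - S) + (2 * C) * b i + ((n : ℝ) * B - 2 * B) * (b i) ^ 2 + 0 * (b i) ^ 3
          + (-(n : ℝ)) * (b i) ^ 4)]
    rw [hpoly (B ^ 2 - S) (2 * C) ((n : ℝ) * B - 2 * B) 0 (-(n : ℝ))]
    ring
  -- combine
  have key : (n : ℝ) * ((n : ℝ) - 1) * S ≤ ((n : ℝ) ^ 2 - 3 * (n : ℝ) + 3) * B ^ 2 := by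
    have h3 : ∑ i, ∑ j, ((n : ℝ) - 2) * ((b i - b j) ^ 2 * (B - (b i) ^ 2 - (b j) ^ 2))
        = ((n : ℝ) - 2) * ∑ i, ∑ j, (b i - b j) ^ 2 * (B - (b i) ^ 2 - (b j) ^ 2) := by
      rw [Finset.mul_sum]
      exact Finset.sum_congr rfl fun i _ => (Finset.mul_sum _ _ _).symm
    rw [hL, h3, hR] at hsumle
    nlinarith [hsumle]
  have e1 : B ^ 2 / (n : ℝ) * (n : ℝ) = B ^ 2 := div_mul_cancel₀ _ hn0.ne'
  have e2 : ((n : ℝ) - 2) ^ 2 / ((n : ℝ) * ((n : ℝ) - 1)) * B ^ 2 * ((n : ℝ) * ((n : ℝ) - 1))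
      = ((n : ℝ) - 2) ^ 2 * B ^ 2 := by
    field_simp
  nlinarith [key, e1, e2, mul_pos hn0 hn1]
end

section
/- For symmetric n×n real matrices B_1,...,B_p (p ≥ 1), ∑_{r,s=1}^p ‖[B_r, B_s]‖_F^2 ≤ n · ∑_{r,s=1}^p (tr(B_r B_s))^2, where [B_r,B_s] = B_r B_s − B_s B_r and ‖·‖_F denotes the Frobenius norm. -/
/-!
Both sides are unchanged when the family `B` is replaced by `C a = ∑ r, U r a • B r` for an
orthogonal matrix `U`: each is a sum over `r, s` of an expression that is bilinear in the two
occurrences of `B r` and in the two occurrences of `B s`. Choosing `U` to diagonalise the Gram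
matrix `tr (B r * B s)` makes the `C a` pairwise orthogonal for the Frobenius inner product, so the
right-hand side becomes `n * ∑ a, ‖C a‖ ^ 4`.

Writing `C a = ‖C a‖ • u a` with `u a` of norm one, `‖[C a, C b]‖² = ‖C a‖² ‖C b‖² q a b` where
`q a b = ‖[u a, u b]‖²`, and by AM-GM it suffices that every row sum `∑ b, q a b` is at most `n`.
This is Bessel's inequality: for symmetric `u`, the `(k, l)` entry of `A * u - u * A` is half the
inner product of `u` with a fixed symmetric matrix `N k l`, and for symmetric `A`
`∑ k l, ‖N k l‖² = 4 (n ‖A‖² - (tr A)²)`.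
-/

open Matrix Finset

section OrthogonalMixing

variable {R ι M N : Type*} [CommSemiring R] [Fintype ι] [AddCommMonoid M] [Module R M]
  [AddCommMonoid N] [Module R N]

def mixFamily (U : Matrix ι ι R) (B : ι → M) (a : ι) : M :=
  ∑ r, U r a • B r

theorem isSymm_mixFamily {m : Type*} {U : Matrix ι ι R} {B : ι → Matrix m m R}
    (hB : ∀ r, (B r).IsSymm) (a : ι) : (mixFamily U B a).IsSymm := by
  rw [IsSymm, mixFamily, transpose_sum]
  exact sum_congr rfl fun r _ => by rw [transpose_smul, (hB r).eq]

theorem IsBilinearMap.apply_sum_smul_sum_smul {f : M → M → N} (hf : IsBilinearMap R f)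
    (c d : ι → R) (x y : ι → M) :
    f (∑ r, c r • x r) (∑ s, d s • y s) = ∑ r, ∑ s, (c r * d s) • f (x r) (y s) := by
  change hf.toLinearMap _ _ = ∑ r, ∑ s, (c r * d s) • hf.toLinearMap _ _
  rw [map_sum hf.toLinearMap, LinearMap.sum_apply]
  refine sum_congr rfl fun r _ => ?_
  rw [map_smul, LinearMap.smul_apply, map_sum, smul_sum]
  refine sum_congr rfl fun s _ => ?_
  rw [map_smul, smul_smul]

variable [DecidableEq ι] {U : Matrix ι ι R}

theorem IsBilinearMap.sum_apply_mixFamily_self {f : M → M → N} (hf : IsBilinearMap R f)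
    (hU : U * Uᵀ = 1) (B : ι → M) :
    ∑ a, f (mixFamily U B a) (mixFamily U B a) = ∑ r, f (B r) (B r) := by
  have hU' : ∀ r s, ∑ a, U r a * U s a = if r = s then 1 else 0 := fun r s => by
    simpa [mul_apply, one_apply] using congr_fun (congr_fun hU r) s
  calc ∑ a, f (mixFamily U B a) (mixFamily U B a)
      = ∑ r, ∑ s, (∑ a, U r a * U s a) • f (B r) (B s) := by
        simp only [mixFamily, hf.apply_sum_smul_sum_smul, sum_smul]
        rw [sum_comm]
        exact sum_congr rfl fun r _ => sum_comm
    _ = ∑ r, f (B r) (B r) := by simp [hU', ite_smul]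

theorem sum_sum_mixFamily_eq_of_isBilinearMap {g : M → M → M → M → N}
    (h₁₃ : ∀ y w, IsBilinearMap R fun x z => g x y z w)
    (h₂₄ : ∀ x z, IsBilinearMap R fun y w => g x y z w) (hU : U * Uᵀ = 1) (B : ι → M) :
    ∑ a, ∑ b, g (mixFamily U B a) (mixFamily U B b) (mixFamily U B a) (mixFamily U B b) =
      ∑ r, ∑ s, g (B r) (B s) (B r) (B s) := by
  calc _ = ∑ a, ∑ s, g (mixFamily U B a) (B s) (mixFamily U B a) (B s) :=
        sum_congr rfl fun a _ => (h₂₄ _ _).sum_apply_mixFamily_self hU B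
    _ = ∑ s, ∑ a, g (mixFamily U B a) (B s) (mixFamily U B a) (B s) := sum_comm
    _ = ∑ s, ∑ r, g (B r) (B s) (B r) (B s) :=
        sum_congr rfl fun s _ => (h₁₃ _ _).sum_apply_mixFamily_self hU B
    _ = _ := sum_comm

end OrthogonalMixing

section TraceForms

variable {R ι m : Type*} [CommRing R] [Fintype ι] [Fintype m] {U : Matrix ι ι R}

theorem isBilinearMap_trace_mul : IsBilinearMap R fun X Y : Matrix m m R => trace (X * Y) := by
  constructor <;> intros <;>
    simp only [add_mul, mul_add, Matrix.smul_mul, Matrix.mul_smul, trace_add, trace_smul]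

variable [DecidableEq ι]

theorem sum_sum_trace_commutator_mixFamily (hU : U * Uᵀ = 1) (B : ι → Matrix m m R) :
    ∑ a, ∑ b, trace ((mixFamily U B a * mixFamily U B b - mixFamily U B b * mixFamily U B a) *
      (mixFamily U B a * mixFamily U B b - mixFamily U B b * mixFamily U B a)ᵀ) =
    ∑ r, ∑ s, trace ((B r * B s - B s * B r) * (B r * B s - B s * B r)ᵀ) := by
  refine sum_sum_mixFamily_eq_of_isBilinearMap
    (g := fun X Y Z W => trace ((X * Y - Y * X) * (Z * W - W * Z)ᵀ))
    (fun _ _ => ?_) (fun _ _ => ?_) hU B <;>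
  constructor <;> intros <;>
    simp only [add_mul, mul_add, sub_mul, mul_sub, Matrix.smul_mul, Matrix.mul_smul,
      transpose_add, transpose_sub, transpose_smul, trace_add, trace_sub, trace_smul,
      smul_eq_mul] <;> ring

theorem sum_sum_trace_mul_sq_mixFamily (hU : U * Uᵀ = 1) (B : ι → Matrix m m R) :
    ∑ a, ∑ b, trace (mixFamily U B a * mixFamily U B b) ^ 2 =
      ∑ r, ∑ s, trace (B r * B s) ^ 2 := by
  simp only [sq]
  refine sum_sum_mixFamily_eq_of_isBilinearMap
    (g := fun X Y Z W => trace (X * Y) * trace (Z * W)) (fun _ _ => ?_) (fun _ _ => ?_) hU B <;>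
  constructor <;> intros <;>
    simp only [add_mul, mul_add, Matrix.smul_mul, Matrix.mul_smul, trace_add, trace_smul,
      smul_eq_mul] <;> ring

end TraceForms

theorem exists_mixFamily_trace_mul_eq_zero {ι m : Type*} [Fintype ι] [DecidableEq ι]
    [Fintype m] (B : ι → Matrix m m ℝ) :
    ∃ U : Matrix ι ι ℝ, U * Uᵀ = 1 ∧
      ∀ a b, a ≠ b → trace (mixFamily U B a * mixFamily U B b) = 0 := by
  set G : Matrix ι ι ℝ := of fun r s => trace (B r * B s)
  have hG : G.IsHermitian := by
    ext r s
    simp [G, trace_mul_comm (B r)]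
  set U : Matrix ι ι ℝ := (hG.eigenvectorUnitary : Matrix ι ι ℝ)
  have hUstar : star U = Uᵀ := by rw [star_eq_conjTranspose, conjTranspose_eq_transpose_of_trivial]
  have hdiag : Uᵀ * G * U = diagonal (RCLike.ofReal ∘ hG.eigenvalues) := by
    rw [← hUstar]
    exact hG.conjStarAlgAut_star_eigenvectorUnitary
  refine ⟨U, hUstar ▸ mem_unitaryGroup_iff.mp hG.eigenvectorUnitary.2, fun a b hab => ?_⟩
  calc trace (mixFamily U B a * mixFamily U B b)
      = (Uᵀ * G * U) a b := by
        rw [mixFamily, mixFamily, isBilinearMap_trace_mul.apply_sum_smul_sum_smul]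
        simp only [mul_apply, transpose_apply, sum_mul, smul_eq_mul, G, of_apply]
        rw [sum_comm]
        exact sum_congr rfl fun r _ => sum_congr rfl fun s _ => by ring
    _ = 0 := by rw [hdiag, diagonal_apply_ne _ hab]

theorem commutator_smul_smul {R A : Type*} [CommSemiring R] [Ring A] [Module R A]
    [IsScalarTower R A A] [SMulCommClass R A A] (s t : R) (X Y : A) :
    (s • X) * (t • Y) - (t • Y) * (s • X) = (s * t) • (X * Y - Y * X) := by
  rw [smul_mul_smul_comm, smul_mul_smul_comm, mul_comm t, smul_sub]

theorem sum_sum_mul_mul_le_of_sum_le {ι : Type*} [Fintype ι] {q : ι → ι → ℝ}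
    (hq : ∀ a b, 0 ≤ q a b) (hsymm : ∀ a b, q a b = q b a) {c : ℝ} (hrow : ∀ a, ∑ b, q a b ≤ c)
    (x : ι → ℝ) :
    ∑ a, ∑ b, q a b * (x a * x b) ≤ c * ∑ a, x a ^ 2 := by
  calc ∑ a, ∑ b, q a b * (x a * x b)
      ≤ ∑ a, ∑ b, (q a b * x a ^ 2 / 2 + q b a * x b ^ 2 / 2) := by
        refine sum_le_sum fun a _ => sum_le_sum fun b _ => ?_
        rw [hsymm b a]
        nlinarith [mul_nonneg (hq a b) (sq_nonneg (x a - x b))]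
    _ = ∑ a, ∑ b, q a b * x a ^ 2 := by
        rw [sum_congr rfl fun a _ => sum_add_distrib, sum_add_distrib,
          sum_comm (f := fun a b => q b a * x b ^ 2 / 2), ← sum_add_distrib]
        exact sum_congr rfl fun a _ => by
          rw [← sum_add_distrib]; exact sum_congr rfl fun b _ => by ring
    _ = ∑ a, (∑ b, q a b) * x a ^ 2 := by simp only [sum_mul]
    _ ≤ ∑ a, c * x a ^ 2 := sum_le_sum fun a _ => mul_le_mul_of_nonneg_right (hrow a) (sq_nonneg _)
    _ = c * ∑ a, x a ^ 2 := (mul_sum ..).symm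

namespace Frobenius

variable {m : Type*} [Fintype m] [DecidableEq m]

/- The Frobenius inner product `⟪X, Y⟫ = tr (X * Yᵀ)`, as local instances since `Matrix` carries
no global norm. -/
noncomputable abbrev normedAddCommGroup : NormedAddCommGroup (Matrix m m ℝ) :=
  toMatrixNormedAddCommGroup 1 PosDef.one

attribute [local instance] normedAddCommGroup

noncomputable abbrev innerProductSpace : InnerProductSpace ℝ (Matrix m m ℝ) :=
  toMatrixInnerProductSpace 1 PosSemidef.one

attribute [local instance] innerProductSpace

open scoped RealInnerProductSpace

theorem inner_eq_trace (X Y : Matrix m m ℝ) : ⟪X, Y⟫ = trace (X * Yᵀ) := by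
  change trace (Y * 1 * Xᴴ) = _
  rw [Matrix.mul_one, conjTranspose_eq_transpose_of_trivial, ← trace_transpose, transpose_mul,
    transpose_transpose]

theorem inner_eq_sum (X Y : Matrix m m ℝ) : ⟪X, Y⟫ = ∑ i, ∑ j, X i j * Y i j := by
  simp [inner_eq_trace, trace, mul_apply]

theorem norm_sq_eq_trace (X : Matrix m m ℝ) : ‖X‖ ^ 2 = trace (X * Xᵀ) := by
  rw [← real_inner_self_eq_norm_sq, inner_eq_trace]

theorem norm_sq_eq_sum (X : Matrix m m ℝ) : ‖X‖ ^ 2 = ∑ i, ∑ j, X i j ^ 2 := by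
  rw [← real_inner_self_eq_norm_sq, inner_eq_sum]
  simp only [sq]

theorem inner_transpose_left (X Y : Matrix m m ℝ) : ⟪Xᵀ, Y⟫ = ⟪X, Yᵀ⟫ := by
  rw [inner_eq_sum, inner_eq_sum, sum_comm]
  rfl

theorem norm_transpose (X : Matrix m m ℝ) : ‖Xᵀ‖ = ‖X‖ := by
  rw [← sq_eq_sq₀ (norm_nonneg _) (norm_nonneg _), ← real_inner_self_eq_norm_sq,
    inner_transpose_left, transpose_transpose, real_inner_self_eq_norm_sq]

theorem sum_dotProduct (X Y : Matrix m m ℝ) : ∑ k, X k ⬝ᵥ Y k = ⟪X, Y⟫ := by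
  simp [inner_eq_sum, dotProduct]

theorem inner_vecMulVec_left (x y : m → ℝ) (X : Matrix m m ℝ) :
    ⟪vecMulVec x y, X⟫ = x ⬝ᵥ (X *ᵥ y) := by
  simp only [inner_eq_sum, vecMulVec_apply, dotProduct, mulVec, mul_sum, mul_assoc]
  exact sum_congr rfl fun i _ => sum_congr rfl fun j _ => by ring

theorem inner_vecMulVec (x y z w : m → ℝ) :
    ⟪vecMulVec x y, vecMulVec z w⟫ = (x ⬝ᵥ z) * (y ⬝ᵥ w) := by
  rw [inner_vecMulVec_left, vecMulVec_mulVec, dotProduct_smul, op_smul_eq_mul, dotProduct_comm w,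
    mul_comm]

noncomputable def commutatorEntryDual (A : Matrix m m ℝ) (k l : m) : Matrix m m ℝ :=
  vecMulVec (A k) (Pi.single l 1) - vecMulVec (Pi.single k 1) (Aᵀ l)

theorem inner_commutatorEntryDual (A X : Matrix m m ℝ) (k l : m) :
    ⟪commutatorEntryDual A k l, X⟫ = (A * X - X * A) k l := by
  simp only [commutatorEntryDual, inner_sub_left, inner_vecMulVec_left, mulVec_single_one,
    single_one_dotProduct, Matrix.sub_apply]
  rfl

theorem sum_norm_sq_commutatorEntryDual (A : Matrix m m ℝ) :
    ∑ k, ∑ l, ‖commutatorEntryDual A k l‖ ^ 2 =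
      2 * (Fintype.card m * ‖A‖ ^ 2 - trace A ^ 2) := by
  simp only [commutatorEntryDual, ← real_inner_self_eq_norm_sq, inner_sub_left, inner_sub_right,
    inner_vecMulVec, dotProduct_single_one, single_one_dotProduct, transpose_apply,
    Pi.single_eq_same, mul_one, one_mul]
  have hterm : ∀ k l, A k ⬝ᵥ A k - A k k * A l l - (A k k * A l l - Aᵀ l ⬝ᵥ Aᵀ l) =
      A k ⬝ᵥ A k + Aᵀ l ⬝ᵥ Aᵀ l - 2 * (A k k * A l l) := fun k l => by ring
  simp only [hterm, sum_add_distrib, sum_sub_distrib, ← mul_sum, sum_const, card_univ, nsmul_eq_mul,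
    sum_dotProduct, real_inner_self_eq_norm_sq, norm_transpose]
  rw [← sum_mul, ← sq, trace]
  simp only [diag_apply]
  ring

theorem sum_inner_commutatorEntryDual_transpose (A : Matrix m m ℝ) :
    ∑ k, ∑ l, ⟪commutatorEntryDual A k l, (commutatorEntryDual A k l)ᵀ⟫ =
      2 * (‖A‖ ^ 2 - ⟪A, Aᵀ⟫) := by
  simp only [commutatorEntryDual, transpose_sub, transpose_vecMulVec, inner_sub_left,
    inner_sub_right, inner_vecMulVec, dotProduct_single_one, single_one_dotProduct,
    transpose_apply, Pi.single_apply, mul_ite, mul_one, mul_zero, ite_mul, one_mul, zero_mul]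
  have hA : ∑ k, ∑ l, A k l * A k l = ‖A‖ ^ 2 := by
    rw [← real_inner_self_eq_norm_sq, inner_eq_sum]
  simp only [sum_sub_distrib, sum_ite_eq, sum_ite_eq', mem_univ, if_true, hA, sum_dotProduct,
    real_inner_comm Aᵀ]
  ring

theorem sum_norm_commutator_sq_le {ι : Type*} [Fintype ι] {A : Matrix m m ℝ} (hA : A.IsSymm)
    {u : ι → Matrix m m ℝ} (hu : Orthonormal ℝ u) (hus : ∀ b, (u b).IsSymm) :
    ∑ b, ‖A * u b - u b * A‖ ^ 2 ≤ Fintype.card m * ‖A‖ ^ 2 - trace A ^ 2 := by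
  set N : m → m → Matrix m m ℝ :=
    fun k l => commutatorEntryDual A k l + (commutatorEntryDual A k l)ᵀ
  have hN : ∀ b k l, ⟪u b, N k l⟫ = 2 * (A * u b - u b * A) k l := fun b k l => by
    rw [real_inner_comm, inner_add_left, inner_transpose_left, (hus b).eq,
      inner_commutatorEntryDual]
    ring
  have hNnorm : ∑ k, ∑ l, ‖N k l‖ ^ 2 = 4 * (Fintype.card m * ‖A‖ ^ 2 - trace A ^ 2) := by
    have hsq : ∀ k l, ‖N k l‖ ^ 2 = 2 * ‖commutatorEntryDual A k l‖ ^ 2 +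
        2 * ⟪commutatorEntryDual A k l, (commutatorEntryDual A k l)ᵀ⟫ := fun k l => by
      rw [norm_add_sq_real, norm_transpose]
      ring
    simp only [hsq, sum_add_distrib, ← mul_sum, sum_norm_sq_commutatorEntryDual,
      sum_inner_commutatorEntryDual_transpose, hA.eq, real_inner_self_eq_norm_sq]
    ring
  have bessel : ∀ k l, ∑ b, ⟪u b, N k l⟫ ^ 2 ≤ ‖N k l‖ ^ 2 := fun k l => by
    simpa only [Real.norm_eq_abs, sq_abs] using hu.sum_inner_products_le (N k l) (s := univ)
  calc ∑ b, ‖A * u b - u b * A‖ ^ 2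
      = (∑ k, ∑ l, ∑ b, ⟪u b, N k l⟫ ^ 2) / 4 := by
        simp only [hN, norm_sq_eq_sum, mul_pow, ← mul_sum]
        rw [show (2 : ℝ) ^ 2 = 4 by norm_num, mul_div_cancel_left₀ _ four_ne_zero, sum_comm]
        exact sum_congr rfl fun k _ => sum_comm
    _ ≤ (∑ k, ∑ l, ‖N k l‖ ^ 2) / 4 := by gcongr with k _ l _; exact bessel k l
    _ = Fintype.card m * ‖A‖ ^ 2 - trace A ^ 2 := by rw [hNnorm]; ring

theorem sum_norm_commutator_sq_le_card {ι : Type*} [Fintype ι] {A : Matrix m m ℝ}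
    (hA : A.IsSymm) (hA1 : ‖A‖ ≤ 1) {u : ι → Matrix m m ℝ}
    (hu : Orthonormal ℝ fun b : {b // u b ≠ 0} => u b) (hus : ∀ b, (u b).IsSymm) :
    ∑ b, ‖A * u b - u b * A‖ ^ 2 ≤ Fintype.card m := by
  classical
  calc ∑ b, ‖A * u b - u b * A‖ ^ 2
      = ∑ b ∈ univ with u b ≠ 0, ‖A * u b - u b * A‖ ^ 2 := by
        rw [sum_filter_of_ne]
        intro b _ hb hub
        simp [hub] at hb
    _ = ∑ b : {b // u b ≠ 0}, ‖A * u b - u b * A‖ ^ 2 := sum_subtype _ (by simp) _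
    _ ≤ Fintype.card m * ‖A‖ ^ 2 - trace A ^ 2 := sum_norm_commutator_sq_le hA hu fun b => hus b
    _ ≤ Fintype.card m := by
        linarith [sq_nonneg (trace A), mul_le_of_le_one_right (Nat.cast_nonneg (Fintype.card m))
          (pow_le_one₀ (n := 2) (norm_nonneg A) hA1)]

theorem sum_sum_norm_commutator_sq_le {ι : Type*} [Fintype ι] {C : ι → Matrix m m ℝ}
    (hC : ∀ a, (C a).IsSymm) (horth : Pairwise fun a b => ⟪C a, C b⟫ = 0) :
    ∑ a, ∑ b, ‖C a * C b - C b * C a‖ ^ 2 ≤ Fintype.card m * ∑ a, (‖C a‖ ^ 2) ^ 2 := by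
  set u : ι → Matrix m m ℝ := fun a => ‖C a‖⁻¹ • C a
  have hnorm : ∀ a, C a ≠ 0 → ‖u a‖ = 1 := fun a h => by
    rw [norm_smul, norm_inv, norm_norm, inv_mul_cancel₀ (norm_ne_zero_iff.mpr h)]
  have hu1 : ∀ a, ‖u a‖ ≤ 1 := fun a => by
    rcases eq_or_ne (C a) 0 with h | h
    · simp [u, h]
    · exact (hnorm a h).le
  have hon : Orthonormal ℝ fun b : {b // u b ≠ 0} => u b :=
    ⟨fun b => hnorm b fun h => b.2 (by simp [u, h]), fun b b' hbb' => by
      simp only [u, inner_smul_left, inner_smul_right, horth (Subtype.coe_ne_coe.mpr hbb'),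
        mul_zero]⟩
  have hCu : ∀ a, C a = ‖C a‖ • u a := fun a => by
    rcases eq_or_ne (C a) 0 with h | h
    · simp [h]
    · simp [u, smul_smul, mul_inv_cancel₀ (norm_ne_zero_iff.mpr h)]
  have hus : ∀ a, (u a).IsSymm := fun a => (hC a).smul _
  clear_value u
  have hcomm : ∀ a b, C a * C b - C b * C a = (‖C a‖ * ‖C b‖) • (u a * u b - u b * u a) :=
    fun a b => by
      conv_lhs => rw [hCu a, hCu b]
      exact commutator_smul_smul _ _ _ _
  calc ∑ a, ∑ b, ‖C a * C b - C b * C a‖ ^ 2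
      = ∑ a, ∑ b, ‖u a * u b - u b * u a‖ ^ 2 * (‖C a‖ ^ 2 * ‖C b‖ ^ 2) := by
        simp only [hcomm, norm_smul, norm_mul, norm_norm]
        exact sum_congr rfl fun a _ => sum_congr rfl fun b _ => by ring
    _ ≤ Fintype.card m * ∑ a, (‖C a‖ ^ 2) ^ 2 :=
        sum_sum_mul_mul_le_of_sum_le (fun _ _ => sq_nonneg _) (fun a b => by rw [norm_sub_rev])
          (fun a => sum_norm_commutator_sq_le_card (hus a) (hu1 a) hon hus) _

theorem sum_sum_trace_commutator_le {ι : Type*} [Fintype ι] {C : ι → Matrix m m ℝ}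
    (hC : ∀ a, (C a).IsSymm) (horth : ∀ a b, a ≠ b → trace (C a * C b) = 0) :
    ∑ a, ∑ b, trace ((C a * C b - C b * C a) * (C a * C b - C b * C a)ᵀ) ≤
      Fintype.card m * ∑ a, ∑ b, trace (C a * C b) ^ 2 := by
  have hinner : ∀ a b, trace (C a * C b) = ⟪C a, C b⟫ := fun a b => by
    rw [inner_eq_trace, (hC b).eq]
  have hdiag : ∀ a, ∑ b, trace (C a * C b) ^ 2 = (‖C a‖ ^ 2) ^ 2 := fun a => by
    rw [Fintype.sum_eq_single a fun b hb => by rw [horth a b (Ne.symm hb), sq, zero_mul],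
      hinner, real_inner_self_eq_norm_sq]
  simp only [← norm_sq_eq_trace, hdiag]
  exact sum_sum_norm_commutator_sq_le hC fun a b hab => (hinner a b).symm.trans (horth a b hab)

end Frobenius

theorem itoh_commutator_estimate_general (n p : ℕ)
    (B : Fin p → Matrix (Fin n) (Fin n) ℝ) (hsymm : ∀ r, (B r).IsSymm) :
    ∑ r, ∑ s, Matrix.trace ((B r * B s - B s * B r) * (B r * B s - B s * B r)ᵀ) ≤
      n * ∑ r, ∑ s, (Matrix.trace (B r * B s)) ^ 2 := by
  obtain ⟨U, hU, horth⟩ := exists_mixFamily_trace_mul_eq_zero B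
  rw [← sum_sum_trace_commutator_mixFamily hU B, ← sum_sum_trace_mul_sq_mixFamily hU B]
  simpa only [Fintype.card_fin] using
    Frobenius.sum_sum_trace_commutator_le (isSymm_mixFamily hsymm) horth

theorem itoh_commutator_estimate (n p : ℕ) (hp : 1 ≤ p)
    (B : Fin p → Matrix (Fin n) (Fin n) ℝ) (hsymm : ∀ r, (B r).IsSymm) :
    ∑ r, ∑ s, Matrix.trace ((B r * B s - B s * B r) * (B r * B s - B s * B r)ᵀ) ≤
      n * ∑ r, ∑ s, (Matrix.trace (B r * B s)) ^ 2 :=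
  itoh_commutator_estimate_general n p B hsymm
end

section
/- For p symmetric n×n real matrices B_1,...,B_p, ∑_{r,s} N([B_r,B_s]) + ∑_{r,s} (tr(B_r B_s))^2 ≤ (1 + (1/2)·sgn(p−1)) · (∑_r N(B_r))^2, where N(A) = tr(A Aᵀ). In particular, for p = 1 the bound is (N(B_1))^2 and for p ≥ 2 the bound is (3/2)(∑_r N(B_r))^2. -/
/-!
All three sums are unchanged when the family is replaced by an orthogonal recombination
`B'_r = ∑ a, W a r • B a`, so by diagonalising the Gram matrix one may assume the `B_r` pairwise
orthogonal for the Frobenius inner product. Adding them in order of decreasing norm, induction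
gives the sharper bound `3/2 τ² - 1/2 (τ - 2 N_max)²`, where `τ = ∑ N(B_r)`. The inductive step is
`∑ s, N([A, B_s]) ≤ (2 N(A) - M) ∑ s, N(B_s) + M²` for an orthogonal family with
`N(B_s) ≤ M ≤ N(A)`. To see it, diagonalise `A = diag d`, so that
`N([A, C]) = ∑ (d_i - d_j)² C_ij²`; in this basis Bessel's inequality against `E_ij + E_ji`
gives `∑ s, (B_s)_ij² ≤ M / 2` for `i ≠ j`, and the pairs with `(d_i - d_j)² > 2 ∑ d² - M` form a star
(they pairwise meet and span no triangle, since `d_i d_j < 0` on each of them), whose total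
excess is at most `M` by Cauchy–Schwarz.
-/

open Matrix

def frobeniusInner {m n : Type*} [Fintype m] [Fintype n] : LinearMap.BilinForm ℝ (Matrix m n ℝ) :=
  LinearMap.mk₂ ℝ (fun X Y => ∑ i, ∑ j, X i j * Y i j)
    (fun _ _ _ => by simp only [Matrix.add_apply, add_mul, Finset.sum_add_distrib])
    (fun _ _ _ => by simp only [Matrix.smul_apply, smul_eq_mul, Finset.mul_sum, mul_assoc])
    (fun _ _ _ => by simp only [Matrix.add_apply, mul_add, Finset.sum_add_distrib])
    (fun _ _ _ => by simp only [Matrix.smul_apply, smul_eq_mul, Finset.mul_sum, mul_left_comm])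

local notation "⟪" X ", " Y "⟫_F" => frobeniusInner X Y

section Frobenius

variable {m n : Type*} [Fintype m] [Fintype n]

theorem frobeniusInner_apply (X Y : Matrix m n ℝ) : ⟪X, Y⟫_F = ∑ i, ∑ j, X i j * Y i j := rfl

theorem frobeniusInner_comm (X Y : Matrix m n ℝ) : ⟪X, Y⟫_F = ⟪Y, X⟫_F := by
  simp only [frobeniusInner_apply, mul_comm]

theorem frobeniusInner_self (X : Matrix m n ℝ) : ⟪X, X⟫_F = ∑ i, ∑ j, X i j ^ 2 := by
  simp only [frobeniusInner_apply, sq]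

theorem frobeniusInner_self_nonneg (X : Matrix m n ℝ) : 0 ≤ ⟪X, X⟫_F := by
  rw [frobeniusInner_self]; positivity

theorem frobeniusInner_self_eq_zero {X : Matrix m n ℝ} : ⟪X, X⟫_F = 0 ↔ X = 0 := by
  rw [frobeniusInner_self, ← Fintype.sum_prod_type',
    Fintype.sum_eq_zero_iff_of_nonneg fun _ => sq_nonneg _]
  simp [funext_iff, ← Matrix.ext_iff]

theorem frobeniusInner_eq_trace (X Y : Matrix m n ℝ) : ⟪X, Y⟫_F = trace (X * Yᵀ) := by
  simp only [frobeniusInner_apply, trace, Matrix.diag, mul_apply, transpose_apply]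

theorem sum_frobeniusInner_sq_le {ι : Type*} {T : Finset ι} {C : ι → Matrix m n ℝ}
    (horth : (T : Set ι).Pairwise fun s t => ⟪C s, C t⟫_F = 0) {M : ℝ} (hM0 : 0 ≤ M)
    (hM : ∀ s ∈ T, ⟪C s, C s⟫_F ≤ M) (u : Matrix m n ℝ) :
    ∑ s ∈ T, ⟪C s, u⟫_F ^ 2 ≤ M * ⟪u, u⟫_F := by
  rcases hM0.eq_or_lt with rfl | hMpos
  · have hC (s) (hs : s ∈ T) : C s = 0 :=
      frobeniusInner_self_eq_zero.1 ((hM s hs).antisymm (frobeniusInner_self_nonneg _))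
    simp +contextual [hC]
  set S := ∑ s ∈ T, ⟪C s, u⟫_F ^ 2
  set w := ∑ s ∈ T, ⟪C s, u⟫_F • C s
  have hwu : ⟪w, u⟫_F = S := by
    simp only [w, S, map_sum, map_smul, LinearMap.sum_apply, LinearMap.smul_apply, smul_eq_mul, sq]
  have hww : ⟪w, w⟫_F ≤ M * S := by
    have hdiag : ⟪w, w⟫_F = ∑ s ∈ T, ⟪C s, u⟫_F ^ 2 * ⟪C s, C s⟫_F := by
      simp only [w, map_sum, map_smul, LinearMap.sum_apply, LinearMap.smul_apply, smul_eq_mul]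
      refine Finset.sum_congr rfl fun s hs => ?_
      rw [Finset.sum_eq_single s (fun t ht hts => by simp [horth ht hs hts]) (absurd hs)]
      ring
    rw [hdiag, Finset.mul_sum]
    refine Finset.sum_le_sum fun s hs => ?_
    rw [mul_comm]
    exact mul_le_mul_of_nonneg_right (hM s hs) (sq_nonneg _)
  have hsq := frobeniusInner_self_nonneg (M • u - w)
  simp only [map_sub, map_smul, LinearMap.sub_apply, LinearMap.smul_apply, smul_eq_mul,
    frobeniusInner_comm u w, hwu] at hsq
  nlinarith

end Frobenius

section Recombine

variable {R M N ι κ : Type*} [CommSemiring R] [AddCommMonoid M] [Module R M]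
  [AddCommMonoid N] [Module R N] [Fintype ι] [Fintype κ] [DecidableEq ι]

def recombine (W : Matrix ι κ R) (u : ι → M) (r : κ) : M := ∑ a, W a r • u a

variable {W : Matrix ι κ R}

omit [Fintype κ] [DecidableEq ι] in
theorem bilin_recombine_recombine (Φ : M →ₗ[R] M →ₗ[R] N) (u v : ι → M) (r s : κ) :
    Φ (recombine W u r) (recombine W v s)
      = recombine W (fun a => recombine W (fun b => Φ (u a) (v b)) s) r := by
  simp only [recombine, map_sum, map_smul, LinearMap.sum_apply, LinearMap.smul_apply,
    Finset.smul_sum]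
  rw [Finset.sum_comm]
  exact Finset.sum_congr rfl fun _ _ => Finset.sum_congr rfl fun _ _ => smul_comm _ _ _

theorem sum_bilin_recombine (hW : W * Wᵀ = 1) (f : M →ₗ[R] M →ₗ[R] R) (u v : ι → M) :
    ∑ r, f (recombine W u r) (recombine W v r) = ∑ a, f (u a) (v a) := by
  have hW' (a b : ι) : ∑ r, W a r * W b r = if a = b then 1 else 0 := by
    simpa [mul_apply, one_apply] using congrFun (congrFun hW a) b
  calc ∑ r, f (recombine W u r) (recombine W v r)
      = ∑ a, ∑ b, (∑ r, W a r * W b r) * f (u a) (v b) := by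
        simp_rw [bilin_recombine_recombine f u v]
        simp only [recombine, smul_eq_mul, Finset.mul_sum, Finset.sum_mul, mul_assoc]
        rw [Finset.sum_comm]
        exact Finset.sum_congr rfl fun _ _ => Finset.sum_comm
    _ = ∑ a, f (u a) (v a) := by simp [hW']

theorem sum_sum_bilin_recombine (hW : W * Wᵀ = 1) (Φ : M →ₗ[R] M →ₗ[R] N)
    (f : N →ₗ[R] N →ₗ[R] R) (u : ι → M) :
    ∑ r, ∑ s, f (Φ (recombine W u r) (recombine W u s)) (Φ (recombine W u r) (recombine W u s))
      = ∑ a, ∑ b, f (Φ (u a) (u b)) (Φ (u a) (u b)) := by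
  simp_rw [bilin_recombine_recombine Φ]
  rw [Finset.sum_comm]
  simp_rw [sum_bilin_recombine hW]
  rw [Finset.sum_comm]
  simp_rw [sum_bilin_recombine hW]

end Recombine

theorem exists_common_vertex {ι : Type*} [Nonempty ι] {P : ι → ι → Prop}
    (hsymm : ∀ i j, P i j → P j i)
    (hmeet : ∀ i j k l, P i j → P k l → i = k ∨ i = l ∨ j = k ∨ j = l)
    (htri : ∀ a b c, P a b → P b c → P a c → False) :
    ∃ v, ∀ i j, P i j → i = v ∨ j = v := by
  by_contra! h
  obtain ⟨a, b, hab, -, -⟩ := h (Classical.arbitrary ι)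
  obtain ⟨x, y, hxy, hx, hy⟩ := h a
  obtain ⟨z, w, hzw, hz, hw⟩ := h b
  -- `xy` and `zw` each meet `ab` and each other, which closes a triangle on `ab`
  grind

section Excess

variable {ι : Type*} [Fintype ι] (d : ι → ℝ) {c : ℝ}

theorem ne_of_lt_sq_sub (hc : ∑ k, d k ^ 2 ≤ c) {i j : ι} (h : c < (d i - d j) ^ 2) : i ≠ j := by
  rintro rfl
  rw [sub_self, zero_pow two_ne_zero] at h
  have : 0 ≤ ∑ k, d k ^ 2 := by positivity
  linarith

theorem mul_neg_of_lt_sq_sub (hc : ∑ k, d k ^ 2 ≤ c) {i j : ι} (h : c < (d i - d j) ^ 2) :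
    d i * d j < 0 := by
  classical
  have hpair : d i ^ 2 + d j ^ 2 ≤ ∑ k, d k ^ 2 := by
    rw [← Finset.sum_pair (f := fun k => d k ^ 2) (ne_of_lt_sq_sub d hc h)]
    exact Finset.sum_le_univ_sum_of_nonneg fun _ => sq_nonneg _
  nlinarith

theorem eq_or_eq_of_lt_sq_sub (hc : ∑ k, d k ^ 2 ≤ c) {i j k l : ι} (hij : c < (d i - d j) ^ 2)
    (hkl : c < (d k - d l) ^ 2) : i = k ∨ i = l ∨ j = k ∨ j = l := by
  classical
  by_contra! h
  have hfour : d i ^ 2 + d j ^ 2 + d k ^ 2 + d l ^ 2 ≤ ∑ m, d m ^ 2 := by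
    have := Finset.sum_le_univ_sum_of_nonneg (s := {i, j, k, l}) (f := fun m => d m ^ 2)
      fun _ => sq_nonneg _
    rwa [Finset.sum_insert (by simp [h.1, h.2.1, ne_of_lt_sq_sub d hc hij]),
      Finset.sum_insert (by simp [h.2.2.1, h.2.2.2]), Finset.sum_pair (ne_of_lt_sq_sub d hc hkl),
      ← add_assoc, ← add_assoc] at this
  nlinarith [sq_nonneg (d i + d j), sq_nonneg (d k + d l)]

theorem exists_forall_lt_sq_sub_imp [Nonempty ι] (hc : ∑ k, d k ^ 2 ≤ c) :
    ∃ v, ∀ i j, c < (d i - d j) ^ 2 → i = v ∨ j = v := by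
  refine exists_common_vertex (fun i j h => by rwa [← neg_sub, neg_sq])
    (fun i j k l => eq_or_eq_of_lt_sq_sub d hc) fun a b e hab hbe hae => ?_
  have := mul_pos_of_neg_of_neg (mul_neg_of_lt_sq_sub d hc hab) (mul_neg_of_lt_sq_sub d hc hbe)
  nlinarith [mul_neg_of_lt_sq_sub d hc hae, sq_nonneg (d b)]

theorem sum_posPart_sq_sub_le {β : ℝ} (hβ0 : 0 ≤ β) (hβ : β ≤ ∑ k, d k ^ 2) (v : ι) :
    ∑ j, ((d v - d j) ^ 2 - (2 * ∑ k, d k ^ 2 - β))⁺ ≤ β := by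
  classical
  set N := ∑ k, d k ^ 2
  set c := 2 * N - β
  set J := Finset.univ.filter fun j => c < (d v - d j) ^ 2
  have hJ : ∑ j, ((d v - d j) ^ 2 - c)⁺ = ∑ j ∈ J, ((d v - d j) ^ 2 - c) := by
    rw [Finset.sum_filter]
    refine Finset.sum_congr rfl fun j _ => ?_
    split_ifs with h
    · exact posPart_eq_self.2 (by linarith)
    · exact posPart_eq_zero.2 (by linarith)
  rw [hJ]
  rcases J.eq_empty_or_nonempty with hJe | hJne
  · simpa [hJe] using hβ0
  have hvJ : v ∉ J := by
    simp only [J, Finset.mem_filter, Finset.mem_univ, true_and, sub_self]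
    nlinarith
  have hk : (1 : ℝ) ≤ J.card := by exact_mod_cast hJne.card_pos
  have hmass : d v ^ 2 + ∑ j ∈ J, d j ^ 2 ≤ N := by
    rw [← Finset.sum_insert (f := fun j => d j ^ 2) hvJ]
    exact Finset.sum_le_univ_sum_of_nonneg fun _ => sq_nonneg _
  have hCS : (∑ j ∈ J, d j) ^ 2 ≤ J.card * ∑ j ∈ J, d j ^ 2 := sq_sum_le_card_mul_sum_sq
  have hexpand : ∑ j ∈ J, ((d v - d j) ^ 2 - c)
      = J.card * (d v ^ 2 - c) - 2 * d v * ∑ j ∈ J, d j + ∑ j ∈ J, d j ^ 2 := by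
    rw [Finset.mul_sum, ← nsmul_eq_mul, ← Finset.sum_const, ← Finset.sum_sub_distrib,
      ← Finset.sum_add_distrib]
    exact Finset.sum_congr rfl fun _ _ => by ring
  rw [hexpand]
  -- `∑ j ∈ J, (d v - d j) ^ 2 ≤ (#J + 1) * N`, and `#J * β - (#J - 1) * N ≤ β`
  nlinarith [sq_nonneg (d v + ∑ j ∈ J, d j),
    mul_le_mul_of_nonneg_left hmass (by linarith : (0 : ℝ) ≤ J.card + 1),
    mul_nonneg (by linarith : (0 : ℝ) ≤ J.card - 1) (by linarith : (0 : ℝ) ≤ N - β)]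

theorem sum_sum_posPart_sq_sub_le {β : ℝ} (hβ0 : 0 ≤ β) (hβ : β ≤ ∑ k, d k ^ 2) :
    ∑ i, ∑ j, ((d i - d j) ^ 2 - (2 * ∑ k, d k ^ 2 - β))⁺ ≤ 2 * β := by
  classical
  set e := fun i j => ((d i - d j) ^ 2 - (2 * ∑ k, d k ^ 2 - β))⁺ with he
  rcases isEmpty_or_nonempty ι with hι | hι
  · simp only [Finset.univ_eq_empty, Finset.sum_empty]; linarith
  obtain ⟨v, hv⟩ := exists_forall_lt_sq_sub_imp d (c := 2 * ∑ k, d k ^ 2 - β) (by linarith)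
  have hstar (i j : ι) : e i j ≤ (if i = v then e i j else 0) + (if j = v then e i j else 0) := by
    by_cases h : 2 * ∑ k, d k ^ 2 - β < (d i - d j) ^ 2
    · have he0 : 0 ≤ e i j := posPart_nonneg _
      rcases hv i j h with rfl | rfl <;> split_ifs <;> first | contradiction | linarith
    · have h0 : e i j = 0 := posPart_eq_zero.2 (by linarith)
      rw [h0]
      split_ifs <;> simp
  have hsymm (i : ι) : e i v = e v i := by simp only [he, ← neg_sub (d i), neg_sq]
  calc ∑ i, ∑ j, e i j ≤ ∑ i, ∑ j, ((if i = v then e i j else 0) + (if j = v then e i j else 0)) :=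
        Finset.sum_le_sum fun i _ => Finset.sum_le_sum fun j _ => hstar i j
    _ = ∑ j, e v j + ∑ i, e v i := by
        simp [Finset.sum_add_distrib, Finset.sum_ite_eq', hsymm]
    _ ≤ 2 * β := by linarith [sum_posPart_sq_sub_le d hβ0 hβ v]

end Excess

section Commutator

variable {m ι : Type*}

theorem isSymm_iff_star_eq {X : Matrix m m ℝ} : X.IsSymm ↔ star X = X := by
  rw [IsSymm, star_eq_conjTranspose, conjTranspose_eq_transpose_of_trivial]

variable [Fintype m]

theorem frobeniusInner_self_commutator_comm (X Y : Matrix m m ℝ) :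
    ⟪Y * X - X * Y, Y * X - X * Y⟫_F = ⟪X * Y - Y * X, X * Y - Y * X⟫_F := by
  simp only [← neg_sub (X * Y), map_neg, LinearMap.neg_apply, neg_neg]

variable [DecidableEq m]

theorem frobeniusInner_conjStarAlgAut (U : unitary (Matrix m m ℝ)) (X Y : Matrix m m ℝ) :
    ⟪Unitary.conjStarAlgAut ℝ _ U X, Unitary.conjStarAlgAut ℝ _ U Y⟫_F = ⟪X, Y⟫_F := by
  have htr (X Z : Matrix m m ℝ) : ⟪X, Z⟫_F = trace (X * star Z) := by
    rw [frobeniusInner_eq_trace, star_eq_conjTranspose, conjTranspose_eq_transpose_of_trivial]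
  rw [htr, htr, ← map_star, ← map_mul, Unitary.conjStarAlgAut_apply, trace_mul_cycle,
    ← mul_assoc, Unitary.coe_star_mul_self, one_mul]

theorem frobeniusInner_self_diagonal (d : m → ℝ) : ⟪diagonal d, diagonal d⟫_F = ∑ i, d i ^ 2 := by
  simp [frobeniusInner_self, diagonal_apply]

theorem frobeniusInner_self_diagonal_commutator (d : m → ℝ) (C : Matrix m m ℝ) :
    ⟪diagonal d * C - C * diagonal d, diagonal d * C - C * diagonal d⟫_F
      = ∑ i, ∑ j, (d i - d j) ^ 2 * C i j ^ 2 := by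
  simp only [frobeniusInner_self, Matrix.sub_apply, diagonal_mul, mul_diagonal]
  exact Finset.sum_congr rfl fun i _ => Finset.sum_congr rfl fun j _ => by ring

theorem frobeniusInner_single_add_single (X : Matrix m m ℝ) (i j : m) :
    ⟪X, single i j 1 + single j i 1⟫_F = X i j + X j i := by
  simp [frobeniusInner_apply, single_apply, mul_add, Finset.sum_add_distrib, ite_and]

variable {T : Finset ι} {C : ι → Matrix m m ℝ} {M : ℝ}

theorem sum_sq_apply_le_of_isSymm (hsym : ∀ s ∈ T, (C s).IsSymm)
    (horth : (T : Set ι).Pairwise fun s t => ⟪C s, C t⟫_F = 0) (hM0 : 0 ≤ M)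
    (hM : ∀ s ∈ T, ⟪C s, C s⟫_F ≤ M) {i j : m} (hij : i ≠ j) :
    ∑ s ∈ T, C s i j ^ 2 ≤ M / 2 := by
  have h := sum_frobeniusInner_sq_le horth hM0 hM (single i j 1 + single j i 1)
  have hu : ⟪single i j 1 + single j i 1, single i j 1 + single j i 1⟫_F = (2 : ℝ) := by
    rw [frobeniusInner_single_add_single]
    norm_num [hij, hij.symm]
  have hC : ∀ s ∈ T, ⟪C s, single i j 1 + single j i 1⟫_F ^ 2 = 4 * C s i j ^ 2 := fun s hs => by
    rw [frobeniusInner_single_add_single, (hsym s hs).apply i j]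
    ring
  rw [Finset.sum_congr rfl hC, ← Finset.mul_sum, hu] at h
  linarith

theorem sum_frobeniusInner_diagonal_commutator_le (d : m → ℝ) (hsym : ∀ s ∈ T, (C s).IsSymm)
    (horth : (T : Set ι).Pairwise fun s t => ⟪C s, C t⟫_F = 0) (hM0 : 0 ≤ M)
    (hM : ∀ s ∈ T, ⟪C s, C s⟫_F ≤ M) (hMd : M ≤ ∑ i, d i ^ 2) :
    ∑ s ∈ T, ⟪diagonal d * C s - C s * diagonal d, diagonal d * C s - C s * diagonal d⟫_F
      ≤ (2 * ∑ i, d i ^ 2 - M) * ∑ s ∈ T, ⟪C s, C s⟫_F + M ^ 2 := by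
  set c := 2 * ∑ i, d i ^ 2 - M
  set e := fun i j => ((d i - d j) ^ 2 - c)⁺ with he
  have hsplit (i j : m) : (d i - d j) ^ 2 ≤ c + e i j := by
    linarith [le_posPart ((d i - d j) ^ 2 - c)]
  have hoff (i j : m) : e i j * ∑ s ∈ T, C s i j ^ 2 ≤ e i j * (M / 2) := by
    rcases eq_or_ne i j with rfl | hij
    · simp [he, posPart_eq_zero.2 (by linarith : (d i - d i) ^ 2 - c ≤ 0)]
    exact mul_le_mul_of_nonneg_left (sum_sq_apply_le_of_isSymm hsym horth hM0 hM hij)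
      (posPart_nonneg _)
  calc ∑ s ∈ T, ⟪diagonal d * C s - C s * diagonal d, diagonal d * C s - C s * diagonal d⟫_F
      = ∑ s ∈ T, ∑ i, ∑ j, (d i - d j) ^ 2 * C s i j ^ 2 := by
        simp_rw [frobeniusInner_self_diagonal_commutator]
    _ ≤ ∑ s ∈ T, ∑ i, ∑ j, (c + e i j) * C s i j ^ 2 := by
        gcongr with s _ i _ j _
        exact hsplit i j
    _ = c * ∑ s ∈ T, ⟪C s, C s⟫_F + ∑ i, ∑ j, e i j * ∑ s ∈ T, C s i j ^ 2 := by
        simp only [add_mul, Finset.sum_add_distrib, frobeniusInner_self, Finset.mul_sum]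
        congr 1
        rw [Finset.sum_comm]
        exact Finset.sum_congr rfl fun i _ => Finset.sum_comm
    _ ≤ c * ∑ s ∈ T, ⟪C s, C s⟫_F + ∑ i, ∑ j, e i j * (M / 2) :=
        add_le_add le_rfl (Finset.sum_le_sum fun i _ => Finset.sum_le_sum fun j _ => hoff i j)
    _ ≤ c * ∑ s ∈ T, ⟪C s, C s⟫_F + 2 * M * (M / 2) := by
        simp_rw [← Finset.sum_mul]
        gcongr
        exact sum_sum_posPart_sq_sub_le d hM0 hMd
    _ = c * ∑ s ∈ T, ⟪C s, C s⟫_F + M ^ 2 := by ring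

theorem Matrix.IsSymm.exists_eq_conjStarAlgAut_diagonal {A : Matrix m m ℝ} (hA : A.IsSymm) :
    ∃ (U : unitary (Matrix m m ℝ)) (d : m → ℝ), A = Unitary.conjStarAlgAut ℝ _ U (diagonal d) := by
  have hH : A.IsHermitian := by
    rwa [IsHermitian, conjTranspose_eq_transpose_of_trivial]
  refine ⟨hH.eigenvectorUnitary, hH.eigenvalues, ?_⟩
  conv_lhs => rw [hH.spectral_theorem]
  simp only [RCLike.ofReal_real_eq_id, Function.id_comp]

theorem sum_frobeniusInner_commutator_le {A : Matrix m m ℝ} (hA : A.IsSymm)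
    (hsym : ∀ s ∈ T, (C s).IsSymm) (horth : (T : Set ι).Pairwise fun s t => ⟪C s, C t⟫_F = 0)
    (hM0 : 0 ≤ M) (hM : ∀ s ∈ T, ⟪C s, C s⟫_F ≤ M) (hMA : M ≤ ⟪A, A⟫_F) :
    ∑ s ∈ T, ⟪A * C s - C s * A, A * C s - C s * A⟫_F
      ≤ (2 * ⟪A, A⟫_F - M) * ∑ s ∈ T, ⟪C s, C s⟫_F + M ^ 2 := by
  obtain ⟨U, d, rfl⟩ := hA.exists_eq_conjStarAlgAut_diagonal
  set φ := Unitary.conjStarAlgAut ℝ _ U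
  obtain ⟨C, rfl⟩ : ∃ C' : ι → Matrix m m ℝ, C = fun s => φ (C' s) :=
    ⟨fun s => φ.symm (C s), by simp⟩
  have hinner (X Y : Matrix m m ℝ) : ⟪φ X, φ Y⟫_F = ⟪X, Y⟫_F := frobeniusInner_conjStarAlgAut U X Y
  simp only [← map_mul, ← map_sub, hinner, frobeniusInner_self_diagonal] at hM horth hMA ⊢
  refine sum_frobeniusInner_diagonal_commutator_le d (fun s hs => ?_) horth hM0 hM hMA
  have h := isSymm_iff_star_eq.1 (hsym s hs)
  rw [← map_star] at h
  exact isSymm_iff_star_eq.2 (EquivLike.injective φ h)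

end Commutator

section Family

variable {m ι : Type*} [Fintype m] [DecidableEq m]

theorem sum_commutator_add_sum_sq_le_of_pairwise (B : ι → Matrix m m ℝ) (T : Finset ι)
    (hsym : ∀ r ∈ T, (B r).IsSymm) (horth : (T : Set ι).Pairwise fun r s => ⟪B r, B s⟫_F = 0)
    {r₀ : ι} (hr₀ : r₀ ∈ T) (hmax : ∀ r ∈ T, ⟪B r, B r⟫_F ≤ ⟪B r₀, B r₀⟫_F) :
    ∑ r ∈ T, ∑ s ∈ T, ⟪B r * B s - B s * B r, B r * B s - B s * B r⟫_F
        + ∑ r ∈ T, ⟪B r, B r⟫_F ^ 2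
      ≤ 3 / 2 * (∑ r ∈ T, ⟪B r, B r⟫_F) ^ 2
        - 1 / 2 * (∑ r ∈ T, ⟪B r, B r⟫_F - 2 * ⟪B r₀, B r₀⟫_F) ^ 2 := by
  classical
  induction T using Finset.induction_on_max_value (fun r => ⟪B r, B r⟫_F) generalizing r₀ with
  | empty => simp at hr₀
  | insert a T haT hamax ih =>
    have hr₀a : ⟪B r₀, B r₀⟫_F = ⟪B a, B a⟫_F := by
      refine le_antisymm ?_ (hmax a (Finset.mem_insert_self a T))
      rcases Finset.mem_insert.1 hr₀ with rfl | h
      exacts [le_rfl, hamax r₀ h]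
    have hsymT : ∀ r ∈ T, (B r).IsSymm := fun r hr => hsym r (Finset.mem_insert_of_mem hr)
    have horthT : (T : Set ι).Pairwise fun r s => ⟪B r, B s⟫_F = 0 :=
      horth.mono (by simp)
    have hdouble : ∑ r ∈ insert a T, ∑ s ∈ insert a T,
          ⟪B r * B s - B s * B r, B r * B s - B s * B r⟫_F
        = ∑ r ∈ T, ∑ s ∈ T, ⟪B r * B s - B s * B r, B r * B s - B s * B r⟫_F
          + 2 * ∑ s ∈ T, ⟪B a * B s - B s * B a, B a * B s - B s * B a⟫_F := by
      simp only [Finset.sum_insert haT, sub_self, map_zero, zero_add,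
        Finset.sum_add_distrib, frobeniusInner_self_commutator_comm (B a)]
      ring
    rw [hr₀a, hdouble, Finset.sum_insert haT, Finset.sum_insert haT]
    rcases T.eq_empty_or_nonempty with rfl | hTne
    · simp only [Finset.sum_empty]
      linarith
    obtain ⟨r₁, hr₁, hr₁max⟩ := T.exists_max_image (fun r => ⟪B r, B r⟫_F) hTne
    have hcross := sum_frobeniusInner_commutator_le (hsym a (Finset.mem_insert_self a T)) hsymT
      horthT (frobeniusInner_self_nonneg _) hr₁max (hamax r₁ hr₁)
    have := ih hsymT horthT hr₁ hr₁max
    nlinarith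

end Family

section Gram

variable {M ι : Type*} [AddCommMonoid M] [Module ℝ M] [Fintype ι] [DecidableEq ι]

theorem exists_mul_transpose_eq_one_pairwise_recombine (f : M →ₗ[ℝ] M →ₗ[ℝ] ℝ)
    (hf : ∀ x y, f x y = f y x) (u : ι → M) :
    ∃ W : Matrix ι ι ℝ, W * Wᵀ = 1 ∧
      Pairwise fun r s => f (recombine W u r) (recombine W u s) = 0 := by
  have hG : (Matrix.of fun a b => f (u a) (u b)).IsSymm := by
    ext a b
    exact hf _ _
  obtain ⟨U, d, hU⟩ := hG.exists_eq_conjStarAlgAut_diagonal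
  have hUt : star (U : Matrix ι ι ℝ) = (U : Matrix ι ι ℝ)ᵀ := by
    rw [star_eq_conjTranspose, conjTranspose_eq_transpose_of_trivial]
  refine ⟨U, by rw [← hUt, Unitary.mul_star_self_of_mem U.2], fun r s hrs => ?_⟩
  have hdiag : (U : Matrix ι ι ℝ)ᵀ * Matrix.of (fun a b => f (u a) (u b)) * U = diagonal d := by
    rw [hU, Unitary.conjStarAlgAut_apply, ← hUt]
    simp only [← mul_assoc, Unitary.coe_star_mul_self, one_mul]
    rw [mul_assoc, Unitary.coe_star_mul_self, mul_one]
  have hrs' := congrFun (congrFun hdiag r) s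
  rw [diagonal_apply_ne _ hrs] at hrs'
  dsimp only
  rw [← hrs', bilin_recombine_recombine]
  simp only [recombine, mul_apply, transpose_apply, of_apply, smul_eq_mul, Finset.sum_mul,
    Finset.mul_sum]
  rw [Finset.sum_comm]
  exact Finset.sum_congr rfl fun _ _ => Finset.sum_congr rfl fun _ _ => by ring

end Gram

section General

variable {m ι : Type*} [Fintype m] [DecidableEq m] [Fintype ι] [DecidableEq ι]

theorem sum_sum_commutator_add_sum_sum_sq_le (B : ι → Matrix m m ℝ) (hsym : ∀ r, (B r).IsSymm) :
    ∑ r, ∑ s, ⟪B r * B s - B s * B r, B r * B s - B s * B r⟫_F + ∑ r, ∑ s, ⟪B r, B s⟫_F ^ 2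
      ≤ 3 / 2 * (∑ r, ⟪B r, B r⟫_F) ^ 2 := by
  obtain ⟨W, hW, horth⟩ :=
    exists_mul_transpose_eq_one_pairwise_recombine frobeniusInner frobeniusInner_comm B
  have hcomm := sum_sum_bilin_recombine hW (LinearMap.mul ℝ _ - (LinearMap.mul ℝ _).flip)
    frobeniusInner B
  have hgram := sum_sum_bilin_recombine hW frobeniusInner (LinearMap.mul ℝ ℝ) B
  have htrace := sum_bilin_recombine hW frobeniusInner B B
  simp only [LinearMap.sub_apply, LinearMap.flip_apply, LinearMap.mul_apply', ← sq] at hcomm hgram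
  set B' := recombine W B
  have hsym' (r : ι) : (B' r).IsSymm := by
    simp only [B', recombine, IsSymm, transpose_sum, transpose_smul, (hsym _).eq]
  have hdiag : ∑ r, ∑ s, ⟪B' r, B' s⟫_F ^ 2 = ∑ r, ⟪B' r, B' r⟫_F ^ 2 :=
    Finset.sum_congr rfl fun r _ =>
      Finset.sum_eq_single r (fun s _ hsr => by simp [horth hsr.symm]) (by simp)
  rcases isEmpty_or_nonempty ι with hι | hι
  · simp
  obtain ⟨r₀, -, hr₀⟩ := Finset.univ.exists_max_image (fun r => ⟪B' r, B' r⟫_F) Finset.univ_nonempty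
  have h := sum_commutator_add_sum_sq_le_of_pairwise B' Finset.univ (fun r _ => hsym' r)
    (horth.set_pairwise _) (Finset.mem_univ r₀) fun r _ => hr₀ r (Finset.mem_univ r)
  rw [← hcomm, ← hgram, ← htrace, hdiag]
  nlinarith [sq_nonneg (∑ r, ⟪B' r, B' r⟫_F - 2 * ⟪B' r₀, B' r₀⟫_F)]

end General

theorem li_li_inequality (n p : ℕ)
    (B : Fin p → Matrix (Fin n) (Fin n) ℝ) (hsymm : ∀ r, (B r).IsSymm) :
    ∑ r, ∑ s, Matrix.trace ((B r * B s - B s * B r) * (B r * B s - B s * B r)ᵀ)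
      + ∑ r, ∑ s, (Matrix.trace (B r * B s)) ^ 2 ≤
      (1 + (1 / 2) * (if p ≤ 1 then (0 : ℝ) else 1)) *
        (∑ r, Matrix.trace (B r * (B r)ᵀ)) ^ 2 := by
  have hgram (r s : Fin p) : trace (B r * B s) = frobeniusInner (B r) (B s) := by
    rw [frobeniusInner_eq_trace, (hsymm s).eq]
  simp only [hgram, ← frobeniusInner_eq_trace]
  split_ifs with hp
  · interval_cases p <;> simp
  · linarith [sum_sum_commutator_add_sum_sum_sq_le B hsymm]
end

section
/- Fix n ≥ 2, an integer 1 ≤ m ≤ n−1, real k ≥ 1 with k ≠ n/4, and a ∈ (0,1). Let λ = −√(1−a²)/a appear with multiplicity m and μ = a/√(1−a²) with multiplicity n−m as principal curvatures, S = mλ² + (n−m)μ², H = (mλ + (n−m)μ)/n. Then the equation ∑λᵢ³ + (n²/(2k))H³ − (n/(2k)+1)·H·S = 0 (where ∑λᵢ³ = mλ³+(n−m)μ³) holds if and only if a² = (m−2k)/(n−4k). -/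
/-!
For two distinct principal curvatures `λ, μ` of multiplicities `m, n - m`, the `k`-extremal
expression factors as `m (n - m) (λ - μ)² ((2k - m) λ + (2k - n + m) μ) / (2kn)`, so it vanishes
exactly when `(2k - m) λ + (2k - n + m) μ = 0`. On the Clifford torus `λ μ = -1`, and multiplying
this linear condition by `a √(1 - a²)` turns it into `(4k - n) a² = 2k - m`.
-/

open Real Set

section KExtremal

variable {K : Type*} [Field K]

theorem k_extremal_two_curvatures_eq {n m k lam mu : K} (hn : n ≠ 0) (hk : 2 * k ≠ 0) :
    (m * lam ^ 3 + (n - m) * mu ^ 3)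
        + n ^ 2 / (2 * k) * ((m * lam + (n - m) * mu) / n) ^ 3
        - (n / (2 * k) + 1) * ((m * lam + (n - m) * mu) / n) * (m * lam ^ 2 + (n - m) * mu ^ 2)
      = m * (n - m) * (lam - mu) ^ 2 * ((2 * k - m) * lam + (2 * k - n + m) * mu)
          / (2 * k * n) := by
  have h2 : (2 : K) ≠ 0 := left_ne_zero_of_mul hk
  have hk' : k ≠ 0 := right_ne_zero_of_mul hk
  field_simp
  ring

theorem k_extremal_two_curvatures_eq_zero_iff {n m k lam mu : K} (hn : n ≠ 0) (hk : 2 * k ≠ 0)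
    (hm : m ≠ 0) (hnm : n - m ≠ 0) (hlm : lam ≠ mu) :
    (m * lam ^ 3 + (n - m) * mu ^ 3)
        + n ^ 2 / (2 * k) * ((m * lam + (n - m) * mu) / n) ^ 3
        - (n / (2 * k) + 1) * ((m * lam + (n - m) * mu) / n) * (m * lam ^ 2 + (n - m) * mu ^ 2)
        = 0 ↔
      (2 * k - m) * lam + (2 * k - n + m) * mu = 0 := by
  rw [k_extremal_two_curvatures_eq hn hk]
  simp [hn, hk, hm, hnm, sub_ne_zero.mpr hlm]

end KExtremal

section CliffordTorus

variable {a : ℝ}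

theorem clifford_curvatures_lt (ha : a ∈ Ioo 0 1) :
    -√(1 - a ^ 2) / a < a / √(1 - a ^ 2) := by
  obtain ⟨ha0, ha1⟩ := ha
  have hs : 0 < √(1 - a ^ 2) := sqrt_pos.mpr (by nlinarith)
  calc -√(1 - a ^ 2) / a < 0 := div_neg_of_neg_of_pos (neg_neg_of_pos hs) ha0
    _ < a / √(1 - a ^ 2) := div_pos ha0 hs

theorem clifford_curvatures_combination_eq_zero_iff (ha : a ∈ Ioo 0 1) (c d : ℝ) :
    c * (-√(1 - a ^ 2) / a) + d * (a / √(1 - a ^ 2)) = 0 ↔ (c + d) * a ^ 2 = c := by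
  obtain ⟨ha0, ha1⟩ := ha
  have h1a : 0 < 1 - a ^ 2 := by nlinarith
  have hs : 0 < √(1 - a ^ 2) := sqrt_pos.mpr h1a
  have hs2 : √(1 - a ^ 2) ^ 2 = 1 - a ^ 2 := sq_sqrt h1a.le
  rw [← mul_left_inj' (mul_pos ha0 hs).ne', zero_mul]
  have hclear : (c * (-√(1 - a ^ 2) / a) + d * (a / √(1 - a ^ 2))) * (a * √(1 - a ^ 2))
      = (c + d) * a ^ 2 - c := by
    field_simp
    linear_combination (-c) * hs2
  rw [hclear, sub_eq_zero]

end CliffordTorus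

theorem clifford_torus_k_extremal_general (n m : ℕ) (hm1 : 1 ≤ m) (hm2 : m ≤ n - 1)
    (k : ℝ) (hk : 1 ≤ k) (hk4 : k ≠ n / 4) (a : ℝ) (ha : a ∈ Set.Ioo (0 : ℝ) 1)
    (lam mu S H : ℝ)
    (hlam : lam = -Real.sqrt (1 - a ^ 2) / a)
    (hmu : mu = a / Real.sqrt (1 - a ^ 2))
    (hS : S = m * lam ^ 2 + (n - m : ℝ) * mu ^ 2)
    (hH : H = (m * lam + (n - m : ℝ) * mu) / n) :
    (m * lam ^ 3 + (n - m : ℝ) * mu ^ 3) + n ^ 2 / (2 * k) * H ^ 3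
        - (n / (2 * k) + 1) * H * S = 0 ↔
      a ^ 2 = (m - 2 * k) / (n - 4 * k) := by
  have hm : (1 : ℝ) ≤ m := by exact_mod_cast hm1
  have hmn : (m : ℝ) + 1 ≤ n := by exact_mod_cast (by omega : m + 1 ≤ n)
  have hn4 : (n : ℝ) - 4 * k ≠ 0 := fun h => hk4 (by linarith)
  subst hS hH
  rw [k_extremal_two_curvatures_eq_zero_iff (by linarith) (by positivity) (by positivity)
    (by linarith) (hlam ▸ hmu ▸ (clifford_curvatures_lt ha).ne), hlam, hmu,
    clifford_curvatures_combination_eq_zero_iff ha, eq_div_iff hn4]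
  constructor <;> intro h <;> linarith

theorem clifford_torus_k_extremal (n m : ℕ) (hn : 2 ≤ n) (hm1 : 1 ≤ m) (hm2 : m ≤ n - 1)
    (k : ℝ) (hk : 1 ≤ k) (hk4 : k ≠ n / 4) (a : ℝ) (ha : a ∈ Set.Ioo (0 : ℝ) 1)
    (lam mu S H : ℝ)
    (hlam : lam = -Real.sqrt (1 - a ^ 2) / a)
    (hmu : mu = a / Real.sqrt (1 - a ^ 2))
    (hS : S = m * lam ^ 2 + (n - m : ℝ) * mu ^ 2)
    (hH : H = (m * lam + (n - m : ℝ) * mu) / n) :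
    (m * lam ^ 3 + (n - m : ℝ) * mu ^ 3) + n ^ 2 / (2 * k) * H ^ 3
        - (n / (2 * k) + 1) * H * S = 0 ↔
      a ^ 2 = (m - 2 * k) / (n - 4 * k) :=
  clifford_torus_k_extremal_general n m hm1 hm2 k hk hk4 a ha lam mu S H hlam hmu hS hH
end

section
/- Let m ≥ 1, k ≥ 1 with k ≠ m/2, and λ₁ > 1/√3. Set λ₂ = (λ₁−√3)/(1+√3λ₁), λ₃ = (λ₁+√3)/(1−√3λ₁), n = 3m, H = m(λ₁+λ₂+λ₃)/n, S = m(λ₁²+λ₂²+λ₃²). Then the k-extremal equation ∑_i λ_i³ + (n²/(2k))H³ − (n/(2k)+1)HS = 0, where each λ_j has multiplicity m so that ∑_i λ_i³ = m(λ₁³+λ₂³+λ₃³), holds if and only if λ₁ = √3 (equivalently λ₂ = 0, λ₃ = −√3). -/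
set_option maxHeartbeats 1000000 in
theorem iso_g3_k_extremal (m : ℕ) (hm : 1 ≤ m) (k : ℝ) (hk : 1 ≤ k) (hk2 : k ≠ m / 2)
    (lam1 : ℝ) (hlam1 : 1 / Real.sqrt 3 < lam1)
    (lam2 lam3 : ℝ) (n : ℕ) (hn : n = 3 * m) (H S : ℝ)
    (hlam2 : lam2 = (lam1 - Real.sqrt 3) / (1 + Real.sqrt 3 * lam1))
    (hlam3 : lam3 = (lam1 + Real.sqrt 3) / (1 - Real.sqrt 3 * lam1))
    (hH : H = m * (lam1 + lam2 + lam3) / n)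
    (hS : S = m * (lam1 ^ 2 + lam2 ^ 2 + lam3 ^ 2)) :
    m * (lam1 ^ 3 + lam2 ^ 3 + lam3 ^ 3) + n ^ 2 / (2 * k) * H ^ 3
        - (n / (2 * k) + 1) * H * S = 0 ↔
      lam1 = Real.sqrt 3 := by
  have hs : Real.sqrt 3 ^ 2 = 3 := Real.sq_sqrt (by norm_num)
  set s := Real.sqrt 3 with hsdef
  have hs0 : 0 < s := Real.sqrt_pos.mpr (by norm_num)
  have ht0 : 0 < lam1 := lt_trans (by positivity) hlam1
  have hst : 1 < s * lam1 := by
    have := (div_lt_iff₀ hs0).mp hlam1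
    linarith [mul_comm lam1 s]
  have hd1 : (1 : ℝ) + s * lam1 ≠ 0 := by nlinarith
  have hd2 : (1 : ℝ) - s * lam1 ≠ 0 := by nlinarith
  have hD : 1 - 3 * lam1 ^ 2 < 0 := by nlinarith
  have hDne : (1 : ℝ) - 3 * lam1 ^ 2 ≠ 0 := ne_of_lt hD
  have hk0 : k ≠ 0 := by linarith
  have hm0 : (1 : ℝ) ≤ (m : ℝ) := by exact_mod_cast hm
  have hmne : (m : ℝ) ≠ 0 := by linarith
  have hkm : 2 * k - (m : ℝ) ≠ 0 := by
    intro h; apply hk2; linarith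
  have hnR : (n : ℝ) = 3 * m := by exact_mod_cast hn
  have hnne : (n : ℝ) ≠ 0 := by rw [hnR]; positivity
  have hP : lam2 + lam3 = 8 * lam1 / (1 - 3 * lam1 ^ 2) := by
    rw [hlam2, hlam3]
    rw [div_add_div _ _ hd1 hd2, div_eq_div_iff (mul_ne_zero hd1 hd2) hDne]
    linear_combination (2 * lam1 + 2 * lam1 ^ 3) * hs
  have hQ : lam2 * lam3 = (lam1 ^ 2 - 3) / (1 - 3 * lam1 ^ 2) := by
    rw [hlam2, hlam3]
    rw [div_mul_div_comm, div_eq_div_iff (mul_ne_zero hd1 hd2) hDne]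
    linear_combination (lam1 ^ 4 - 1) * hs
  have hp1 : lam1 + lam2 + lam3 = lam1 + 8 * lam1 / (1 - 3 * lam1 ^ 2) := by
    rw [← hP]; ring
  have hp2 : lam1 ^ 2 + lam2 ^ 2 + lam3 ^ 2
      = lam1 ^ 2 + (8 * lam1 / (1 - 3 * lam1 ^ 2)) ^ 2
        - 2 * ((lam1 ^ 2 - 3) / (1 - 3 * lam1 ^ 2)) := by
    rw [← hP, ← hQ]; ring
  have hp3 : lam1 ^ 3 + lam2 ^ 3 + lam3 ^ 3
      = lam1 ^ 3 + (8 * lam1 / (1 - 3 * lam1 ^ 2)) ^ 3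
        - 3 * ((lam1 ^ 2 - 3) / (1 - 3 * lam1 ^ 2)) * (8 * lam1 / (1 - 3 * lam1 ^ 2)) := by
    rw [← hP, ← hQ]; ring
  have key : (m : ℝ) * (lam1 ^ 3 + lam2 ^ 3 + lam3 ^ 3) + (n : ℝ) ^ 2 / (2 * k) * H ^ 3
      - ((n : ℝ) / (2 * k) + 1) * H * S
      = 9 * m * (2 * k - m) * (lam1 * (3 - lam1 ^ 2))
        * ((lam1 * (3 - lam1 ^ 2)) ^ 2 + (1 - 3 * lam1 ^ 2) ^ 2)
        / (k * (1 - 3 * lam1 ^ 2) ^ 3) := by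
    rw [hH, hS, hnR, hp3, hp2, hp1]
    generalize hDg : 1 - 3 * lam1 ^ 2 = D at *
    field_simp
    rw [← hDg]
    ring
  rw [key]
  constructor
  · intro h
    have hden : k * (1 - 3 * lam1 ^ 2) ^ 3 ≠ 0 := by
      exact mul_ne_zero hk0 (pow_ne_zero _ hDne)
    have hnum : 9 * (m : ℝ) * (2 * k - m) * (lam1 * (3 - lam1 ^ 2))
        * ((lam1 * (3 - lam1 ^ 2)) ^ 2 + (1 - 3 * lam1 ^ 2) ^ 2) = 0 :=
      (div_eq_zero_iff.mp h).resolve_right hden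
    have hpos : (0 : ℝ) < (lam1 * (3 - lam1 ^ 2)) ^ 2 + (1 - 3 * lam1 ^ 2) ^ 2 := by
      have h2 : (0 : ℝ) < (1 - 3 * lam1 ^ 2) ^ 2 := by positivity
      nlinarith [sq_nonneg (lam1 * (3 - lam1 ^ 2))]
    have hu0 : lam1 * (3 - lam1 ^ 2) = 0 := by
      by_contra hc
      have h9 : (9 : ℝ) * m ≠ 0 := by positivity
      exact (mul_ne_zero (mul_ne_zero (mul_ne_zero h9 hkm) hc) (ne_of_gt hpos)) hnum
    have hl3 : lam1 ^ 2 = 3 := by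
      rcases mul_eq_zero.mp hu0 with h' | h'
      · exact absurd h' (ne_of_gt ht0)
      · linarith
    have h4 : lam1 = Real.sqrt (lam1 ^ 2) := (Real.sqrt_sq ht0.le).symm
    rw [h4, hl3]
  · intro h
    have hu : lam1 * (3 - lam1 ^ 2) = 0 := by rw [h]; rw [hsdef] at hs ⊢; rw [hs]; ring
    rw [hu]
    simp
end

section
/- Let m ∈ {1,2}, k ≥ 1 with k ≠ m/2, n = 6m, and λ₁ > √3 with λ₁ ∉ {√3} (so all six values are defined). Set λ₂ = (√3λ₁−1)/(√3+λ₁), λ₃ = (λ₁−√3)/(1+√3λ₁), λ₄ = −1/λ₁, λ₅ = (λ₁+√3)/(1−√3λ₁), λ₆ = (√3λ₁+1)/(√3−λ₁), each with multiplicity m. Then the k-extremal equation ∑_i λ_i³ + (n²/(2k))H³ − (n/(2k)+1)HS = 0 holds if and only if λ₁ = 2+√3. -/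
/-!
Write `λ₁ = cot θ` and `c = cot 6θ`. The `λ_α = cot (θ + (α - 1)π/6)` are the six roots of
`Re (x + i)⁶ - c Im (x + i)⁶ = x⁶ - 6c x⁵ - 15x⁴ + 20c x³ + 15x² - 6c x - 1`, so Newton's identities
give the power sums `p₁ = 6c`, `p₂ = 36c² + 30`, `p₃ = 216c³ + 210c`; these are checked directly by
grouping the roots into the pairs `cot (θ + φ), cot (θ - φ)`, whose sums and products are rational
in `λ₁`. With `n = 6m` and `H = p₁/6` the k-extremal expression becomes
`90 m (2k - m)/k · c (c² + 1)`, which vanishes iff `cot 6θ = 0`. For `λ₁ > √3` the numerator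
`(λ₁² - 1)(λ₁² + 4λ₁ + 1)(λ₁² - 4λ₁ + 1)` of `cot 6θ` has the single root `2 + √3 = cot (π/12)`.
-/

/-- `cot 6θ` as a rational function of `t = cot θ`. -/
noncomputable def cotSixfold (t : ℝ) : ℝ :=
  (t ^ 6 - 15 * t ^ 4 + 15 * t ^ 2 - 1) / (6 * t ^ 5 - 20 * t ^ 3 + 6 * t)

lemma cotSixfold_eq_zero_iff {t : ℝ} (ht : Real.sqrt 3 < t) :
    cotSixfold t = 0 ↔ t = 2 + Real.sqrt 3 := by
  have hs : Real.sqrt 3 ^ 2 = 3 := Real.sq_sqrt (by norm_num)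
  have hs1 : 1 < Real.sqrt 3 := by
    rw [show (1 : ℝ) = Real.sqrt 1 by simp]
    exact Real.sqrt_lt_sqrt (by norm_num) (by norm_num)
  have ht3 : 3 < t ^ 2 := by nlinarith
  have hden : 6 * t ^ 5 - 20 * t ^ 3 + 6 * t ≠ 0 := by
    have : 6 * t ^ 5 - 20 * t ^ 3 + 6 * t = 2 * t * (t ^ 2 - 3) * (3 * t ^ 2 - 1) := by ring
    rw [this]
    have : 0 < t ^ 2 - 3 := by linarith
    have : 0 < 3 * t ^ 2 - 1 := by linarith
    have : 0 < t := by linarith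
    positivity
  have hfac : t ^ 6 - 15 * t ^ 4 + 15 * t ^ 2 - 1
      = (t ^ 2 - 1) * (t ^ 2 + 4 * t + 1) * ((t - (2 + Real.sqrt 3)) * (t - (2 - Real.sqrt 3))) := by
    linear_combination ((t ^ 2 - 1) * (t ^ 2 + 4 * t + 1)) * hs
  rw [cotSixfold, div_eq_zero_iff, or_iff_left hden, hfac]
  have h1 : 0 < (t ^ 2 - 1) * (t ^ 2 + 4 * t + 1) := by
    have : 0 < t ^ 2 - 1 := by linarith
    have : 0 < t := by linarith
    positivity
  have h2 : t - (2 - Real.sqrt 3) ≠ 0 := by linarith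
  simp [h1.ne', h2, sub_eq_zero]

/- For `t = cot θ` and `a = cot φ` the two fractions are `cot (θ + φ)` and `cot (θ - φ)`;
in the `_of_tan` variants `a = tan φ`. -/
lemma cot_add_add_cot_sub {a t : ℝ} (h : a ^ 2 ≠ t ^ 2) :
    (a * t - 1) / (a + t) + (a * t + 1) / (a - t) = 2 * t * (a ^ 2 + 1) / (a ^ 2 - t ^ 2) := by
  obtain ⟨h₁, h₂⟩ := mul_ne_zero_iff.mp (sq_sub_sq a t ▸ sub_ne_zero.mpr h)
  rw [div_add_div _ _ h₁ h₂, sq_sub_sq]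
  ring

lemma cot_add_mul_cot_sub (a t : ℝ) :
    (a * t - 1) / (a + t) * ((a * t + 1) / (a - t)) = (a ^ 2 * t ^ 2 - 1) / (a ^ 2 - t ^ 2) := by
  rw [div_mul_div_comm, sq_sub_sq]
  ring

lemma cot_add_add_cot_sub_of_tan {a t : ℝ} (h : a ^ 2 * t ^ 2 ≠ 1) :
    (t - a) / (1 + a * t) + (t + a) / (1 - a * t) = 2 * t * (a ^ 2 + 1) / (1 - a ^ 2 * t ^ 2) := by
  have hden : 1 - a ^ 2 * t ^ 2 = (1 + a * t) * (1 - a * t) := by ring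
  have h₀ : (1 + a * t) * (1 - a * t) ≠ 0 := hden ▸ sub_ne_zero.mpr h.symm
  obtain ⟨h₁, h₂⟩ := mul_ne_zero_iff.mp h₀
  rw [div_add_div _ _ h₁ h₂, hden]
  ring

lemma cot_add_mul_cot_sub_of_tan (a t : ℝ) :
    (t - a) / (1 + a * t) * ((t + a) / (1 - a * t)) = (t ^ 2 - a ^ 2) / (1 - a ^ 2 * t ^ 2) := by
  rw [div_mul_div_comm, show 1 - a ^ 2 * t ^ 2 = (1 + a * t) * (1 - a * t) by ring]
  ring

lemma power_sums_eq_cotSixfold {t x₂ x₃ x₄ x₅ x₆ : ℝ} (ht₀ : t ≠ 0) (ht₁ : t ^ 2 ≠ 3)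
    (ht₂ : 3 * t ^ 2 ≠ 1)
    (h₂ : x₂ = (Real.sqrt 3 * t - 1) / (Real.sqrt 3 + t))
    (h₃ : x₃ = (t - Real.sqrt 3) / (1 + Real.sqrt 3 * t))
    (h₄ : x₄ = -1 / t)
    (h₅ : x₅ = (t + Real.sqrt 3) / (1 - Real.sqrt 3 * t))
    (h₆ : x₆ = (Real.sqrt 3 * t + 1) / (Real.sqrt 3 - t)) :
    t + x₂ + x₃ + x₄ + x₅ + x₆ = 6 * cotSixfold t ∧
    t ^ 2 + x₂ ^ 2 + x₃ ^ 2 + x₄ ^ 2 + x₅ ^ 2 + x₆ ^ 2 = 36 * cotSixfold t ^ 2 + 30 ∧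
    t ^ 3 + x₂ ^ 3 + x₃ ^ 3 + x₄ ^ 3 + x₅ ^ 3 + x₆ ^ 3
      = 216 * cotSixfold t ^ 3 + 210 * cotSixfold t := by
  have hs : Real.sqrt 3 ^ 2 = 3 := Real.sq_sqrt (by norm_num)
  have hsum₁ : t + x₄ = (t ^ 2 - 1) / t := by rw [h₄]; field_simp; ring
  have hprod₁ : t * x₄ = -1 := by rw [h₄]; field_simp
  have hsum₂ : x₂ + x₆ = 8 * t / (3 - t ^ 2) := by
    rw [h₂, h₆, cot_add_add_cot_sub (by rw [hs]; exact ht₁.symm), hs]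
    ring
  have hprod₂ : x₂ * x₆ = (3 * t ^ 2 - 1) / (3 - t ^ 2) := by
    rw [h₂, h₆, cot_add_mul_cot_sub, hs]
  have hsum₃ : x₃ + x₅ = 8 * t / (1 - 3 * t ^ 2) := by
    rw [h₃, h₅, cot_add_add_cot_sub_of_tan (by rw [hs]; exact ht₂), hs]
    ring
  have hprod₃ : x₃ * x₅ = (t ^ 2 - 3) / (1 - 3 * t ^ 2) := by
    rw [h₃, h₅, cot_add_mul_cot_sub_of_tan, hs]
  have hc : cotSixfold t
      = (t ^ 6 - 15 * t ^ 4 + 15 * t ^ 2 - 1) / (2 * t * (3 - t ^ 2) * (1 - 3 * t ^ 2)) := by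
    rw [cotSixfold]; ring
  have h3t : 3 - t ^ 2 ≠ 0 := sub_ne_zero.mpr ht₁.symm
  have h13t : 1 - t ^ 2 * 3 ≠ 0 := sub_ne_zero.mpr (mul_comm (t ^ 2) 3 ▸ ht₂.symm)
  refine ⟨?_, ?_, ?_⟩
  · rw [show t + x₂ + x₃ + x₄ + x₅ + x₆ = (t + x₄) + (x₂ + x₆) + (x₃ + x₅) by ring,
      hsum₁, hsum₂, hsum₃, hc]
    field_simp
    ring
  · rw [show t ^ 2 + x₂ ^ 2 + x₃ ^ 2 + x₄ ^ 2 + x₅ ^ 2 + x₆ ^ 2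
        = (t + x₄) ^ 2 + (x₂ + x₆) ^ 2 + (x₃ + x₅) ^ 2 - 2 * (t * x₄ + x₂ * x₆ + x₃ * x₅) by ring,
      hsum₁, hsum₂, hsum₃, hprod₁, hprod₂, hprod₃, hc]
    field_simp
    ring
  · rw [show t ^ 3 + x₂ ^ 3 + x₃ ^ 3 + x₄ ^ 3 + x₅ ^ 3 + x₆ ^ 3
        = (t + x₄) ^ 3 + (x₂ + x₆) ^ 3 + (x₃ + x₅) ^ 3
          - 3 * ((t + x₄) * (t * x₄) + (x₂ + x₆) * (x₂ * x₆) + (x₃ + x₅) * (x₃ * x₅)) by ring,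
      hsum₁, hsum₂, hsum₃, hprod₁, hprod₂, hprod₃, hc]
    field_simp
    ring

lemma k_extremal_eq_of_power_sums {m n k c H S p₁ p₂ p₃ : ℝ} (hm : m ≠ 0) (hk : k ≠ 0)
    (hn : n = 6 * m) (hH : n * H = m * p₁) (hS : S = m * p₂) (hp₁ : p₁ = 6 * c)
    (hp₂ : p₂ = 36 * c ^ 2 + 30) (hp₃ : p₃ = 216 * c ^ 3 + 210 * c) :
    m * p₃ + n ^ 2 / (2 * k) * H ^ 3 - (n / (2 * k) + 1) * H * S
      = 90 * m * (2 * k - m) / k * (c * (c ^ 2 + 1)) := by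
  obtain rfl : H = c := mul_left_cancel₀ (mul_ne_zero (by norm_num : (6 : ℝ) ≠ 0) hm)
    (by linear_combination hH - hn * H + m * hp₁)
  subst hn hS hp₂ hp₃
  field_simp
  ring

theorem iso_g6_k_extremal (m : ℕ) (hm : m = 1 ∨ m = 2) (k : ℝ) (hk : 1 ≤ k)
    (hk2 : k ≠ m / 2) (n : ℕ) (hn : n = 6 * m)
    (lam1 : ℝ) (hlam1 : Real.sqrt 3 < lam1)
    (lam2 lam3 lam4 lam5 lam6 H S : ℝ)
    (hlam2 : lam2 = (Real.sqrt 3 * lam1 - 1) / (Real.sqrt 3 + lam1))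
    (hlam3 : lam3 = (lam1 - Real.sqrt 3) / (1 + Real.sqrt 3 * lam1))
    (hlam4 : lam4 = -1 / lam1)
    (hlam5 : lam5 = (lam1 + Real.sqrt 3) / (1 - Real.sqrt 3 * lam1))
    (hlam6 : lam6 = (Real.sqrt 3 * lam1 + 1) / (Real.sqrt 3 - lam1))
    (hH : n * H = m * (lam1 + lam2 + lam3 + lam4 + lam5 + lam6))
    (hS : S = m * (lam1 ^ 2 + lam2 ^ 2 + lam3 ^ 2 + lam4 ^ 2 + lam5 ^ 2 + lam6 ^ 2)) :
    m * (lam1 ^ 3 + lam2 ^ 3 + lam3 ^ 3 + lam4 ^ 3 + lam5 ^ 3 + lam6 ^ 3)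
        + n ^ 2 / (2 * k) * H ^ 3 - (n / (2 * k) + 1) * H * S = 0 ↔
      lam1 = 2 + Real.sqrt 3 := by
  have hm₀ : (m : ℝ) ≠ 0 := by rcases hm with rfl | rfl <;> norm_num
  have hk₀ : k ≠ 0 := by positivity
  have hkm : 2 * k - m ≠ 0 := fun h => hk2 (by linarith)
  have ht3 : 3 < lam1 ^ 2 := by
    rw [← Real.sq_sqrt (show (0 : ℝ) ≤ 3 by norm_num)]
    exact pow_lt_pow_left₀ hlam1 (Real.sqrt_nonneg 3) two_ne_zero
  obtain ⟨hp₁, hp₂, hp₃⟩ := power_sums_eq_cotSixfold (by nlinarith) ht3.ne' (by linarith)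
    hlam2 hlam3 hlam4 hlam5 hlam6
  rw [k_extremal_eq_of_power_sums hm₀ hk₀ (by exact_mod_cast hn) hH hS hp₁ hp₂ hp₃,
    mul_eq_zero, mul_eq_zero, or_iff_right (by positivity), or_iff_left (by positivity),
    cotSixfold_eq_zero_iff hlam1]
end

section
/- Let m₁ < m₂ be positive integers, k ≥ 1 real, b = m₂/m₁ > 1. Consider P(x) = (2k/m₁ − 1)(1+2b)x² + 4b(b−1)x − 16(2k/m₁ − b)b(2+b). If 1 ≤ 2k/m₁ ≤ b then P has no positive root; if 2k/m₁ < 1 or 2k/m₁ > b then P has exactly one positive root. -/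
lemma quad_pos_root (A B C : ℝ) (hA : 0 < A) (hC : C < 0) :
    ∃ x, 0 < x ∧ A * x ^ 2 + B * x + C = 0 := by
  have hdisc : 0 ≤ B ^ 2 - 4 * A * C := by nlinarith
  set s := Real.sqrt (B ^ 2 - 4 * A * C) with hs
  have hs2 : s ^ 2 = B ^ 2 - 4 * A * C := Real.sq_sqrt hdisc
  have hs0 : 0 ≤ s := Real.sqrt_nonneg _
  have hsB : B < s := by nlinarith [abs_nonneg B, sq_abs B, le_abs_self B]
  have hnum : 0 < -B + s := by linarith
  refine ⟨(-B + s) / (2 * A), div_pos hnum (by linarith), ?_⟩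
  field_simp
  nlinarith [hs2]

lemma quad_unique (A B C : ℝ) (hAC : A * C < 0) :
    ∃! x, 0 < x ∧ A * x ^ 2 + B * x + C = 0 := by
  have hA : A ≠ 0 := by rintro rfl; simp at hAC
  obtain ⟨x, hx, hxe⟩ : ∃ x, 0 < x ∧ A * x ^ 2 + B * x + C = 0 := by
    rcases lt_or_gt_of_ne hA with h | h
    · have hC : 0 < C := by nlinarith
      obtain ⟨x, hx, he⟩ := quad_pos_root (-A) (-B) (-C) (by linarith) (by linarith)
      exact ⟨x, hx, by linarith⟩
    · exact quad_pos_root A B C h (by nlinarith)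
  refine ⟨x, ⟨hx, hxe⟩, ?_⟩
  rintro y ⟨hy, hye⟩
  by_contra hne
  have h1 : (y - x) * (A * (y + x) + B) = 0 := by linear_combination hye - hxe
  have h2 : A * (y + x) + B = 0 := by
    rcases mul_eq_zero.mp h1 with h | h
    · exact absurd (by linarith : y = x) hne
    · exact h
  have h3 : C = A * (x * y) := by linear_combination hxe - x * h2
  rw [h3] at hAC
  nlinarith [mul_nonneg (sq_nonneg A) (mul_pos hx hy).le]

theorem g4_quadratic_roots (m1 m2 : ℕ) (hm1 : 1 ≤ m1) (hm : m1 < m2)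
    (k b : ℝ) (hk : 1 ≤ k) (hb : b = (m2 : ℝ) / m1)
    (P : ℝ → ℝ)
    (hP : P = fun x => (2 * k / m1 - 1) * (1 + 2 * b) * x ^ 2
      + 4 * b * (b - 1) * x - 16 * (2 * k / m1 - b) * b * (2 + b)) :
    ((1 ≤ 2 * k / m1 ∧ 2 * k / m1 ≤ b) → ¬∃ x, 0 < x ∧ P x = 0) ∧
    ((2 * k / m1 < 1 ∨ b < 2 * k / m1) → ∃! x, 0 < x ∧ P x = 0) := by
  have hm1R : (1 : ℝ) ≤ m1 := by exact_mod_cast hm1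
  have hmR : (m1 : ℝ) < m2 := by exact_mod_cast hm
  have hb1 : 1 < b := by
    rw [hb, lt_div_iff₀ (by linarith)]; linarith
  set t := 2 * k / m1 with ht
  constructor
  · rintro ⟨h1, h2⟩ ⟨x, hx, hPx⟩
    rw [hP] at hPx
    simp only at hPx
    nlinarith [mul_nonneg (mul_nonneg (by linarith : (0:ℝ) ≤ t - 1) (by linarith : (0:ℝ) ≤ 1 + 2 * b)) (sq_nonneg x),
      mul_pos (mul_pos (mul_pos (by norm_num : (0:ℝ) < 4) (by linarith : (0:ℝ) < b)) (by linarith : (0:ℝ) < b - 1)) hx,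
      mul_nonneg (mul_nonneg (by linarith : (0:ℝ) ≤ 16 * (b - t)) (by linarith : (0:ℝ) ≤ b)) (by linarith : (0:ℝ) ≤ 2 + b)]
  · intro h
    have hAC : ((t - 1) * (1 + 2 * b)) * (-(16 * (t - b) * b * (2 + b))) < 0 := by
      rcases h with h | h
      · exact mul_neg_of_neg_of_pos
          (mul_neg_of_neg_of_pos (by linarith) (by linarith))
          (by nlinarith [mul_pos (mul_pos (show (0:ℝ) < 16 * (b - t) by linarith) (show (0:ℝ) < b by linarith)) (show (0:ℝ) < 2 + b by linarith)])
      · exact mul_neg_of_pos_of_neg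
          (mul_pos (by linarith) (by linarith))
          (by nlinarith [mul_pos (mul_pos (show (0:ℝ) < 16 * (t - b) by linarith) (show (0:ℝ) < b by linarith)) (show (0:ℝ) < 2 + b by linarith)])
    obtain ⟨x, ⟨hx, hxe⟩, hu⟩ := quad_unique ((t - 1) * (1 + 2 * b)) (4 * b * (b - 1))
      (-(16 * (t - b) * b * (2 + b))) hAC
    refine ⟨x, ⟨hx, ?_⟩, ?_⟩
    · rw [hP]; simp only; linear_combination hxe
    · rintro y ⟨hy, hye⟩
      rw [hP] at hye; simp only at hye
      exact hu y ⟨hy, by linear_combination hye⟩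
end

section
/- Let a_1,...,a_n be real numbers with ∑ a_i = 0, ∑ a_i² = a, and suppose |∑ a_i³| = (n−2)/√(n(n−1)) · a^{3/2} with a > 0. Then at least n−1 of the a_i are equal. -/
/-!
Put b = √(A / (n (n - 1))), so that n (n - 1) b² = ∑ aᵢ². Cauchy–Schwarz applied to the other
n - 1 terms gives aᵢ ≤ (n - 1) b, and expanding with ∑ aᵢ = 0 gives
∑ (aᵢ + b)² (aᵢ - (n - 1) b) = ∑ aᵢ³ - (n - 2) b ∑ aᵢ².
Every summand on the left is ≤ 0, so ∑ aᵢ³ ≤ (n - 2) b ∑ aᵢ², with equality only if every aᵢ is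
-b or (n - 1) b; then ∑ aᵢ = 0 forces exactly one of them to be (n - 1) b.
Replacing a by -a handles ∑ aᵢ³ < 0.
-/

open Finset

theorem Real.rpow_three_halves_div_sqrt {x : ℝ} (hx : 0 ≤ x) (y : ℝ) :
    x ^ (3 / 2 : ℝ) / √y = √(x / y) * x := by
  rw [Real.sqrt_div hx, show (3 / 2 : ℝ) = 1 + 1 / 2 by norm_num, Real.rpow_add' hx (by norm_num),
    Real.rpow_one, ← Real.sqrt_eq_rpow]
  ring

namespace Okumura

variable {ι : Type*} [Fintype ι] {a : ι → ℝ} {b : ℝ}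

local notation "N" => (Fintype.card ι : ℝ)

theorem card_mul_sq_le_of_sum_eq_zero (hsum : ∑ j, a j = 0) (i : ι) :
    N * a i ^ 2 ≤ (N - 1) * ∑ j, a j ^ 2 := by
  classical
  have hrest : ∑ j ∈ univ.erase i, a j = -a i := by
    linarith [add_sum_erase univ a (mem_univ i)]
  have hrest_sq : ∑ j ∈ univ.erase i, a j ^ 2 = ∑ j, a j ^ 2 - a i ^ 2 := by
    linarith [add_sum_erase univ (fun j => a j ^ 2) (mem_univ i)]
  have hcs := sq_sum_le_card_mul_sum_sq (s := univ.erase i) (f := a)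
  rw [hrest, hrest_sq, cast_card_erase_of_mem (mem_univ i), card_univ] at hcs
  linarith

theorem le_card_sub_one_mul_of_sum_eq_zero (hsum : ∑ j, a j = 0) (hb : 0 ≤ b)
    (hb2 : N * (N - 1) * b ^ 2 = ∑ j, a j ^ 2) (i : ι) : a i ≤ (N - 1) * b := by
  have hN : 1 ≤ N := Nat.one_le_cast.2 (Fintype.card_pos_iff.2 ⟨i⟩)
  refine le_of_sq_le_sq ?_ (mul_nonneg (by linarith) hb)
  have := card_mul_sq_le_of_sum_eq_zero hsum i
  rw [← hb2] at this
  nlinarith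

theorem sum_sq_add_mul_sub_eq (hsum : ∑ j, a j = 0)
    (hb2 : N * (N - 1) * b ^ 2 = ∑ j, a j ^ 2) :
    ∑ i, (a i + b) ^ 2 * (a i - (N - 1) * b) = ∑ i, a i ^ 3 - (N - 2) * b * ∑ i, a i ^ 2 := by
  have hexpand : ∀ i, (a i + b) ^ 2 * (a i - (N - 1) * b)
      = a i ^ 3 + (3 - N) * b * a i ^ 2 + (3 - 2 * N) * b ^ 2 * a i - (N - 1) * b ^ 3 :=
    fun i => by ring
  simp only [hexpand, sum_add_distrib, sum_sub_distrib, ← mul_sum, hsum, sum_const, card_univ,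
    nsmul_eq_mul, ← hb2]
  ring

theorem forall_eq_or_eq_of_sum_cube_eq (hsum : ∑ j, a j = 0) (hb : 0 ≤ b)
    (hb2 : N * (N - 1) * b ^ 2 = ∑ j, a j ^ 2)
    (heq : ∑ i, a i ^ 3 = (N - 2) * b * ∑ i, a i ^ 2) (i : ι) :
    a i = -b ∨ a i = (N - 1) * b := by
  have hnonpos : ∀ j ∈ univ, (a j + b) ^ 2 * (a j - (N - 1) * b) ≤ 0 := fun j _ =>
    mul_nonpos_of_nonneg_of_nonpos (sq_nonneg _)
      (sub_nonpos.2 (le_card_sub_one_mul_of_sum_eq_zero hsum hb hb2 j))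
  have hzero := (sum_eq_zero_iff_of_nonpos hnonpos).1
    (by rw [sum_sq_add_mul_sub_eq hsum hb2, heq, sub_self]) i (mem_univ i)
  rcases mul_eq_zero.1 hzero with h | h
  · exact Or.inl (eq_neg_of_add_eq_zero_left (pow_eq_zero_iff two_ne_zero |>.1 h))
  · exact Or.inr (sub_eq_zero.1 h)

theorem exists_forall_eq_or_eq_of_abs_sum_cube_eq (hsum : ∑ j, a j = 0) (hb : 0 ≤ b)
    (hb2 : N * (N - 1) * b ^ 2 = ∑ j, a j ^ 2)
    (heq : |∑ i, a i ^ 3| = (N - 2) * b * ∑ i, a i ^ 2) :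
    ∃ β, |β| = b ∧ ∀ i, a i = -β ∨ a i = (N - 1) * β := by
  rcases abs_eq (heq ▸ abs_nonneg _) |>.1 heq with h | h
  · exact ⟨b, abs_of_nonneg hb, forall_eq_or_eq_of_sum_cube_eq hsum hb hb2 h⟩
  · have hneg := forall_eq_or_eq_of_sum_cube_eq (a := -a) (by simp [hsum]) hb (by simp [hb2])
      (by simp only [Pi.neg_apply, neg_sq, Odd.neg_pow (by decide : Odd 3), sum_neg_distrib, h,
        neg_neg])
    refine ⟨-b, by rw [abs_neg, abs_of_nonneg hb], fun i => ?_⟩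
    rcases hneg i with hi | hi
    · exact Or.inl (by simp only [Pi.neg_apply] at hi; linarith)
    · exact Or.inr (by simp only [Pi.neg_apply] at hi; linarith)

theorem card_filter_eq_neg_of_forall_eq_or_eq [Nonempty ι] (hb : b ≠ 0) (hsum : ∑ j, a j = 0)
    (h : ∀ i, a i = -b ∨ a i = (N - 1) * b) : #{i | a i = -b} = Fintype.card ι - 1 := by
  classical
  have hcard := card_filter_add_card_filter_not (s := univ) (fun i => a i = -b)
  rw [card_univ] at hcard
  have hsumS : ∑ i ∈ univ.filter (fun i => a i = -b), a i = #{i | a i = -b} * -b := by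
    rw [sum_congr rfl fun i hi => (mem_filter.1 hi).2, sum_const, nsmul_eq_mul]
  have hsumT :
      ∑ i ∈ univ.filter (fun i => ¬a i = -b), a i = #{i | ¬a i = -b} * ((N - 1) * b) := by
    rw [sum_congr rfl fun i hi => (h i).resolve_left (mem_filter.1 hi).2, sum_const, nsmul_eq_mul]
  have hsplit := sum_filter_add_sum_filter_not univ (fun i => a i = -b) a
  rw [hsumS, hsumT, hsum] at hsplit
  have hN : N ≠ 0 := Nat.cast_ne_zero.2 Fintype.card_ne_zero
  have hT : (#{i | ¬a i = -b} : ℝ) = 1 := by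
    have hcardR : (#{i | a i = -b} : ℝ) + #{i | ¬a i = -b} = N := by exact_mod_cast hcard
    have : N * b * (#{i | ¬a i = -b} - 1) = 0 := by linear_combination hsplit + b * hcardR
    simpa [hN, hb, sub_eq_zero] using this
  have : #{i | ¬a i = -b} = 1 := by exact_mod_cast hT
  omega

end Okumura

theorem okumura_equality_case (n : ℕ) (hn : 2 ≤ n) (a : Fin n → ℝ) (A : ℝ)
    (hA : 0 < A) (hsum : ∑ i, a i = 0) (hsq : ∑ i, (a i) ^ 2 = A)
    (heq : |∑ i, (a i) ^ 3| = (n - 2) / Real.sqrt (n * (n - 1)) * A ^ ((3 : ℝ) / 2)) :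
    ∃ c : ℝ, n - 1 ≤ (Finset.univ.filter (fun i => a i = c)).card := by
  have : Nonempty (Fin n) := ⟨⟨0, by omega⟩⟩
  have hpos : (0 : ℝ) < n * (n - 1) := by
    have : (2 : ℝ) ≤ n := by exact_mod_cast hn
    nlinarith
  set b := √(A / (n * (n - 1)))
  have hb : 0 < b := Real.sqrt_pos.2 (div_pos hA hpos)
  have hb2 : (n : ℝ) * (n - 1) * b ^ 2 = A := by
    rw [Real.sq_sqrt (div_pos hA hpos).le, mul_div_cancel₀ _ hpos.ne']
  have hcube : |∑ i, a i ^ 3| = (n - 2) * b * A := by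
    rw [heq, div_mul_comm, Real.rpow_three_halves_div_sqrt hA.le]
    ring
  obtain ⟨β, hβ, hβa⟩ := Okumura.exists_forall_eq_or_eq_of_abs_sum_cube_eq hsum hb.le
    (by simpa [hsq] using hb2) (by simpa [hsq] using hcube)
  have hβ0 : β ≠ 0 := by rintro rfl; simp [← hβ] at hb
  refine ⟨-β, ?_⟩
  simpa using (Okumura.card_filter_eq_neg_of_forall_eq_or_eq hβ0 hsum (by simpa using hβa)).ge
end
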